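/- arXiv:2506.17166 — 9 statements merged into one kernel-verified Lean document; each statement's English description precedes it below -/
import Mathlib

section
/- Let n ≥ 2 be an integer, P0 ∈ (n, n+1), p ∈ (n, P0), δ ∈ [0,1], s ∈ [0,1]. Then there exists a constant a0 = a0(n, P0) such that for every vector x, max(|x|^n − a0, |x|^p) ≤ (s + (δ + |x|²)^(n/2))^(p/n) − (s + δ^(n/2))^(p/n). -/
private lemma add_rpow_le_rpow_add' {a b q : ℝ} (ha : 0 ≤ a) (hb : 0 ≤ b)
    (hq : 1 ≤ q) : a ^ q + b ^ q ≤ (a + b) ^ q := by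
  have h := NNReal.coe_le_coe.2 (NNReal.add_rpow_le_rpow_add ⟨a, ha⟩ ⟨b, hb⟩ hq)
  exact h

theorem energy_density_lower_bound (n : ℕ) (hn : 2 ≤ n) (P0 : ℝ)
    (hP0 : (n : ℝ) < P0 ∧ P0 < (n : ℝ) + 1) :
    ∃ a0 : ℝ, ∀ p δ s : ℝ, p ∈ Set.Ioo (n : ℝ) P0 → δ ∈ Set.Icc (0 : ℝ) 1 →
      s ∈ Set.Icc (0 : ℝ) 1 → ∀ (d : ℕ) (x : EuclideanSpace ℝ (Fin d)),
      max (‖x‖ ^ (n : ℝ) - a0) (‖x‖ ^ p) ≤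
        (s + (δ + ‖x‖ ^ 2) ^ ((n : ℝ) / 2)) ^ (p / (n : ℝ))
          - (s + δ ^ ((n : ℝ) / 2)) ^ (p / (n : ℝ)) := by
  refine ⟨1, fun p δ s hp hδ hs d x => ?_⟩
  set t := ‖x‖ with ht
  have ht0 : 0 ≤ t := norm_nonneg x
  have hn0 : (0:ℝ) < n := by positivity
  have hq1 : (1:ℝ) ≤ p / n := (one_le_div hn0).mpr hp.1.le
  have hp0 : 0 < p := lt_trans hn0 hp.1
  -- (δ + t^2)^(n/2) ≥ δ^(n/2) + t^n
  have hhalf : (1:ℝ) ≤ (n:ℝ)/2 := by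
    rw [le_div_iff₀ (by norm_num)]
    exact_mod_cast by exact_mod_cast hn
  have ht2 : t ^ 2 = t ^ ((2:ℕ):ℝ) := (Real.rpow_natCast t 2).symm
  have htn : (t ^ 2 : ℝ) ^ ((n:ℝ)/2) = t ^ (n:ℝ) := by
    rw [ht2, ← Real.rpow_mul ht0]
    congr 1
    push_cast
    ring
  have key1 : δ ^ ((n:ℝ)/2) + t ^ (n:ℝ) ≤ (δ + t ^ 2) ^ ((n:ℝ)/2) := by
    rw [← htn]
    exact add_rpow_le_rpow_add' hδ.1 (sq_nonneg t) hhalf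
  set A := s + (δ + t ^ 2) ^ ((n:ℝ)/2) with hA
  set B := s + δ ^ ((n:ℝ)/2) with hB
  have hB0 : 0 ≤ B := by rw [hB]; exact add_nonneg hs.1 (Real.rpow_nonneg hδ.1 _)
  have hAB : t ^ (n:ℝ) ≤ A - B := by
    simp only [hA, hB]
    linarith
  have key2 : B ^ (p/(n:ℝ)) + (A - B) ^ (p/(n:ℝ)) ≤ A ^ (p/(n:ℝ)) := by
    have := add_rpow_le_rpow_add' hB0 (le_trans (Real.rpow_nonneg ht0 _) hAB) hq1
    simpa using this
  have key3 : t ^ p ≤ (A - B) ^ (p/(n:ℝ)) := by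
    have : (t ^ (n:ℝ)) ^ (p/(n:ℝ)) ≤ (A - B) ^ (p/(n:ℝ)) :=
      Real.rpow_le_rpow (Real.rpow_nonneg ht0 _) hAB (le_trans zero_le_one hq1)
    rwa [← Real.rpow_mul ht0, mul_div_cancel₀ _ (ne_of_gt hn0)] at this
  have hmain : t ^ p ≤ A ^ (p/(n:ℝ)) - B ^ (p/(n:ℝ)) := by linarith
  refine max_le ?_ hmain
  rcases le_total t 1 with h | h
  · have : t ^ (n:ℝ) ≤ 1 := Real.rpow_le_one ht0 h hn0.le
    have : (0:ℝ) ≤ t ^ p := by positivity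
    linarith
  · have : t ^ (n:ℝ) ≤ t ^ p := Real.rpow_le_rpow_of_exponent_le h hp.1.le
    linarith
end

section
/- Let n ≥ 2 be an integer, P0 ∈ (n, n+1), p ∈ (n, P0), δ ∈ [0,1]. Then there exists a constant C = C(n, P0) such that for every vector x, (1/p)[(1 + (δ + |x|²)^(n/2))^(p/n) − (1 + δ^(n/2))^(p/n)] ≤ (1/n)|x|^n + C · max(|x|^p, 1) · (P0 − n + δ). -/
theorem energy_density_convexity_bound (n : ℕ) (hn : 2 ≤ n) (P0 : ℝ)
    (hP0 : (n : ℝ) < P0 ∧ P0 < (n : ℝ) + 1) :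
    ∃ C : ℝ, ∀ p δ : ℝ, p ∈ Set.Ioo (n : ℝ) P0 → δ ∈ Set.Icc (0 : ℝ) 1 →
      ∀ (d : ℕ) (x : EuclideanSpace ℝ (Fin d)),
      (1 / p) * ((1 + (δ + ‖x‖ ^ 2) ^ ((n : ℝ) / 2)) ^ (p / (n : ℝ))
          - (1 + δ ^ ((n : ℝ) / 2)) ^ (p / (n : ℝ)))
        ≤ (1 / (n : ℝ)) * ‖x‖ ^ (n : ℝ)
          + C * max (‖x‖ ^ p) 1 * (P0 - (n : ℝ) + δ) := by
  obtain ⟨hP0n, hP0n1⟩ := hP0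
  have hnpos : 0 < n := by omega
  have hn0 : (0:ℝ) < (n:ℝ) := by exact_mod_cast hnpos
  have hn2 : (2:ℝ) ≤ (n:ℝ) := by exact_mod_cast hn
  have hPn : (0:ℝ) < P0 - n := by linarith
  refine ⟨2 ^ (n + 3) / ((n:ℝ) * (P0 - n)), ?_⟩
  intro p δ hp hδ d x
  obtain ⟨hpn, hpP0⟩ := hp
  obtain ⟨hδ0, hδ1⟩ := hδ
  set t := ‖x‖ with htdef
  have ht0 : (0:ℝ) ≤ t := norm_nonneg x
  have hp0 : (0:ℝ) < p := hn0.trans hpn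
  have hpn1 : p < (n:ℝ) + 1 := hpP0.trans hP0n1
  have hpn2 : p / (n:ℝ) ≤ 2 := by
    rw [div_le_iff₀ hn0]; linarith
  have hpn0 : 0 < p / (n:ℝ) := div_pos hp0 hn0
  set M := max (t ^ p) 1 with hMdef
  have hM1 : (1:ℝ) ≤ M := le_max_right _ _
  have hM0 : (0:ℝ) ≤ M := by linarith
  -- Step 1: A := 1 + (δ + t^2)^(n/2) ≤ 2 * (1+t)^(n:ℝ)
  have hbase : δ + t ^ 2 ≤ (1 + t) ^ 2 := by nlinarith
  have h1t : (0:ℝ) ≤ 1 + t := by linarith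
  have hsq : ((1 + t) ^ 2 : ℝ) ^ ((n:ℝ)/2) = (1 + t) ^ (n:ℝ) := by
    rw [← Real.rpow_natCast (1 + t) 2, ← Real.rpow_mul h1t]
    congr 1
    push_cast
    ring
  have hone : (1:ℝ) ≤ (1 + t) ^ (n:ℝ) := Real.one_le_rpow (by linarith) (by linarith)
  have hA : 1 + (δ + t ^ 2) ^ ((n:ℝ)/2) ≤ 2 * (1 + t) ^ (n:ℝ) := by
    have := Real.rpow_le_rpow (by positivity) hbase (by positivity : (0:ℝ) ≤ (n:ℝ)/2)
    rw [hsq] at this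
    linarith
  have hApos : (0:ℝ) ≤ 1 + (δ + t ^ 2) ^ ((n:ℝ)/2) := by positivity
  -- Step 2: A^(p/n) ≤ 2^(p/n) * (1+t)^p
  have h2 : (1 + (δ + t ^ 2) ^ ((n:ℝ)/2)) ^ (p/(n:ℝ))
      ≤ (2:ℝ) ^ (p/(n:ℝ)) * (1 + t) ^ p := by
    calc (1 + (δ + t ^ 2) ^ ((n:ℝ)/2)) ^ (p/(n:ℝ))
        ≤ (2 * (1 + t) ^ (n:ℝ)) ^ (p/(n:ℝ)) :=
          Real.rpow_le_rpow hApos hA (le_of_lt hpn0)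
      _ = (2:ℝ) ^ (p/(n:ℝ)) * ((1 + t) ^ (n:ℝ)) ^ (p/(n:ℝ)) :=
          Real.mul_rpow (by norm_num) (by positivity)
      _ = (2:ℝ) ^ (p/(n:ℝ)) * (1 + t) ^ p := by
          rw [← Real.rpow_mul h1t]
          congr 1
          field_simp
  -- Step 3: 2^(p/n) ≤ 4
  have h3 : (2:ℝ) ^ (p/(n:ℝ)) ≤ 4 := by
    have := Real.rpow_le_rpow_of_exponent_le (by norm_num : (1:ℝ) ≤ 2) hpn2
    rw [show ((2:ℝ):ℝ) = ((2:ℕ):ℝ) by norm_num, Real.rpow_natCast] at this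
    norm_num at this
    linarith
  -- Step 4: (1+t)^p ≤ 2^(n+1) * M
  have hmax : (max t 1) ^ p ≤ M := by
    rcases le_total t 1 with h | h
    · rw [max_eq_right h, Real.one_rpow]; exact hM1
    · rw [max_eq_left h]; exact le_max_left _ _
  have h4 : (1 + t) ^ p ≤ 2 ^ (n + 1) * M := by
    have hlt : 1 + t ≤ 2 * max t 1 := by
      have h1 : t ≤ max t 1 := le_max_left _ _
      have h2 : (1:ℝ) ≤ max t 1 := le_max_right _ _
      linarith
    have hmax0 : (0:ℝ) ≤ max t 1 := by positivity
    calc (1 + t) ^ p ≤ (2 * max t 1) ^ p :=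
          Real.rpow_le_rpow h1t hlt (le_of_lt hp0)
      _ = (2:ℝ) ^ p * (max t 1) ^ p := Real.mul_rpow (by norm_num) hmax0
      _ ≤ (2:ℝ) ^ p * M := by
          apply mul_le_mul_of_nonneg_left hmax (by positivity)
      _ ≤ 2 ^ (n + 1) * M := by
          apply mul_le_mul_of_nonneg_right _ hM0
          have := Real.rpow_le_rpow_of_exponent_le (by norm_num : (1:ℝ) ≤ 2)
            (le_of_lt hpn1)
          calc (2:ℝ) ^ p ≤ (2:ℝ) ^ ((n:ℝ) + 1) := this
            _ = 2 ^ (n + 1) := by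
                rw [show ((n:ℝ) + 1) = ((n + 1 : ℕ) : ℝ) by push_cast; ring,
                  Real.rpow_natCast]
  -- Combine: LHS ≤ (2^(n+3)/n) * M
  have hB0 : (0:ℝ) ≤ (1 + δ ^ ((n:ℝ)/2)) ^ (p/(n:ℝ)) := by positivity
  have hkey : (1 / p) * ((1 + (δ + t ^ 2) ^ ((n:ℝ)/2)) ^ (p/(n:ℝ))
      - (1 + δ ^ ((n:ℝ)/2)) ^ (p/(n:ℝ))) ≤ (2 ^ (n + 3) / (n:ℝ)) * M := by
    have hlhs : (1 / p) * ((1 + (δ + t ^ 2) ^ ((n:ℝ)/2)) ^ (p/(n:ℝ))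
        - (1 + δ ^ ((n:ℝ)/2)) ^ (p/(n:ℝ)))
        ≤ (1 / (n:ℝ)) * (1 + (δ + t ^ 2) ^ ((n:ℝ)/2)) ^ (p/(n:ℝ)) := by
      have hApow : (0:ℝ) ≤ (1 + (δ + t ^ 2) ^ ((n:ℝ)/2)) ^ (p/(n:ℝ)) := by positivity
      have h1p : 1 / p ≤ 1 / (n:ℝ) := by
        apply one_div_le_one_div_of_le hn0 (le_of_lt hpn)
      have hstep : (1 / p) * ((1 + (δ + t ^ 2) ^ ((n:ℝ)/2)) ^ (p/(n:ℝ))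
          - (1 + δ ^ ((n:ℝ)/2)) ^ (p/(n:ℝ)))
          ≤ (1 / p) * (1 + (δ + t ^ 2) ^ ((n:ℝ)/2)) ^ (p/(n:ℝ)) := by
        apply mul_le_mul_of_nonneg_left _ (by positivity)
        linarith
      calc _ ≤ (1 / p) * (1 + (δ + t ^ 2) ^ ((n:ℝ)/2)) ^ (p/(n:ℝ)) := hstep
        _ ≤ (1 / (n:ℝ)) * (1 + (δ + t ^ 2) ^ ((n:ℝ)/2)) ^ (p/(n:ℝ)) :=
            mul_le_mul_of_nonneg_right h1p hApow
    have hA4 : (1 + (δ + t ^ 2) ^ ((n:ℝ)/2)) ^ (p/(n:ℝ)) ≤ 2 ^ (n + 3) * M := by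
      calc (1 + (δ + t ^ 2) ^ ((n:ℝ)/2)) ^ (p/(n:ℝ))
          ≤ (2:ℝ) ^ (p/(n:ℝ)) * (1 + t) ^ p := h2
        _ ≤ 4 * (1 + t) ^ p := by
            apply mul_le_mul_of_nonneg_right h3 (by positivity)
        _ ≤ 4 * (2 ^ (n + 1) * M) := by
            apply mul_le_mul_of_nonneg_left h4 (by norm_num)
        _ = 2 ^ (n + 3) * M := by ring
    calc _ ≤ (1 / (n:ℝ)) * (1 + (δ + t ^ 2) ^ ((n:ℝ)/2)) ^ (p/(n:ℝ)) := hlhs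
      _ ≤ (1 / (n:ℝ)) * (2 ^ (n + 3) * M) := by
          apply mul_le_mul_of_nonneg_left hA4 (by positivity)
      _ = (2 ^ (n + 3) / (n:ℝ)) * M := by ring
  -- Finish: RHS ≥ (2^(n+3)/n) * M
  have htn : (0:ℝ) ≤ (1 / (n:ℝ)) * t ^ (n:ℝ) := by positivity
  have hC0 : (0:ℝ) ≤ 2 ^ (n + 3) / ((n:ℝ) * (P0 - (n:ℝ))) := by positivity
  have hrhs : (2 ^ (n + 3) / (n:ℝ)) * M
      ≤ (2 ^ (n + 3) / ((n:ℝ) * (P0 - (n:ℝ)))) * M * (P0 - (n:ℝ) + δ) := by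
    have heq : (2 ^ (n + 3) / ((n:ℝ) * (P0 - (n:ℝ)))) * M * (P0 - (n:ℝ))
        = (2 ^ (n + 3) / (n:ℝ)) * M := by
      field_simp
    calc (2 ^ (n + 3) / (n:ℝ)) * M
        = (2 ^ (n + 3) / ((n:ℝ) * (P0 - (n:ℝ)))) * M * (P0 - (n:ℝ)) := heq.symm
      _ ≤ (2 ^ (n + 3) / ((n:ℝ) * (P0 - (n:ℝ)))) * M * (P0 - (n:ℝ) + δ) := by
          apply mul_le_mul_of_nonneg_left (by linarith) (by positivity)
  linarith
end

section
/- Let n, N ≥ 1 be integers with nN > 2, let δ > 0, p ≥ 1, ε ∈ (0,1], and let G ∈ R^(n×N). Set t := |G|²/(δ + |G|²) ∈ [0,1]. Then the Cordes condition for the coefficients A^{αβ}_{ij} = δ_{ij}δ^{αβ} + (p−2)G_i^α G_j^β/(δ+|G|²) holds with constant ε if and only if −nN(1−ε) − 2(1−ε)(p−2) t + (nN − 2 + ε)(p−2)² t² ≤ 0. -/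
theorem cordes_condition_iff_polynomial (n N : ℕ) (hnN : 2 < n * N)
    (δ p ε : ℝ) (hδ : 0 < δ) (hp : 1 ≤ p) (hε : ε ∈ Set.Ioc (0 : ℝ) 1)
    (G : Fin n → Fin N → ℝ) :
    ((∑ i, ∑ j, ∑ α, ∑ β,
          ((if i = j then (1 : ℝ) else 0) * (if α = β then (1 : ℝ) else 0)
            + (p - 2) * G i α * G j β / (δ + ∑ i', ∑ α', (G i' α') ^ 2)) ^ 2)
        ≤ (1 / ((n * N : ℝ) - 1 + ε)) *
            (∑ i, ∑ α, ((1 : ℝ) + (p - 2) * G i α * G i α /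
              (δ + ∑ i', ∑ α', (G i' α') ^ 2))) ^ 2)
      ↔ (-(n * N : ℝ) * (1 - ε)
          - 2 * (1 - ε) * (p - 2) *
            ((∑ i, ∑ α, (G i α) ^ 2) / (δ + ∑ i, ∑ α, (G i α) ^ 2))
          + ((n * N : ℝ) - 2 + ε) * (p - 2) ^ 2 *
            ((∑ i, ∑ α, (G i α) ^ 2) / (δ + ∑ i, ∑ α, (G i α) ^ 2)) ^ 2 ≤ 0) := by
  obtain ⟨hε0, hε1⟩ := hε
  set S : ℝ := ∑ i, ∑ α, (G i α) ^ 2 with hSdef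
  have hS : 0 ≤ S := by positivity
  have hD : (0 : ℝ) < δ + S := by linarith
  have hDne : (δ + S) ≠ 0 := ne_of_gt hD
  set q : ℝ := p - 2 with hq
  set M : ℝ := (n : ℝ) * N with hM
  have hM3 : (3 : ℝ) ≤ M := by
    have : (3 : ℕ) ≤ n * N := hnN
    rw [hM]; exact_mod_cast this
  -- compute the trace sum
  have htrace : (∑ i : Fin n, ∑ α : Fin N, ((1 : ℝ) + q * G i α * G i α / (δ + S)))
      = M + q * S / (δ + S) := by
    have step : ∀ i : Fin n, (∑ α : Fin N, ((1 : ℝ) + q * G i α * G i α / (δ + S)))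
        = N + q * (∑ α, (G i α) ^ 2) / (δ + S) := by
      intro i
      rw [Finset.sum_add_distrib, Finset.sum_const]
      simp only [Finset.card_univ, Fintype.card_fin, nsmul_eq_mul, mul_one]
      congr 1
      rw [Finset.mul_sum, Finset.sum_div]
      exact Finset.sum_congr rfl fun α _ => by ring
    rw [Finset.sum_congr rfl fun i _ => step i, Finset.sum_add_distrib, Finset.sum_const]
    simp only [Finset.card_univ, Fintype.card_fin, nsmul_eq_mul]
    rw [hM]
    congr 1
    rw [hSdef, Finset.mul_sum, Finset.sum_div]
  -- compute the big sum
  have hbig : (∑ i, ∑ j, ∑ α, ∑ β,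
        ((if i = j then (1 : ℝ) else 0) * (if α = β then (1 : ℝ) else 0)
          + q * G i α * G j β / (δ + S)) ^ 2)
      = M + 2 * q * S / (δ + S) + q ^ 2 * S ^ 2 / (δ + S) ^ 2 := by
    have expand : ∀ (i j : Fin n) (α β : Fin N),
        ((if i = j then (1 : ℝ) else 0) * (if α = β then (1 : ℝ) else 0)
          + q * G i α * G j β / (δ + S)) ^ 2
        = (if i = j then (1 : ℝ) else 0) * (if α = β then (1 : ℝ) else 0)
          + (if i = j then (1 : ℝ) else 0) * (if α = β then (1 : ℝ) else 0)
              * (2 * q * (G i α * G j β) / (δ + S))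
          + q ^ 2 * ((G i α) ^ 2 * (G j β) ^ 2) / (δ + S) ^ 2 := by
      intro i j α β
      split_ifs <;> field_simp <;> ring
    simp only [expand, Finset.sum_add_distrib]
    have h1 : (∑ _i : Fin n, ∑ j : Fin n, ∑ _α : Fin N, ∑ β : Fin N,
        (if _i = j then (1 : ℝ) else 0) * (if _α = β then (1 : ℝ) else 0)) = M := by
      simp [Finset.sum_ite_eq, mul_comm, hM]
    have h2 : (∑ i : Fin n, ∑ j : Fin n, ∑ α : Fin N, ∑ β : Fin N,
        (if i = j then (1 : ℝ) else 0) * (if α = β then (1 : ℝ) else 0)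
          * (2 * q * (G i α * G j β) / (δ + S))) = 2 * q * S / (δ + S) := by
      have e : (∑ i : Fin n, ∑ j : Fin n, ∑ α : Fin N, ∑ β : Fin N,
          (if i = j then (1 : ℝ) else 0) * (if α = β then (1 : ℝ) else 0)
            * (2 * q * (G i α * G j β) / (δ + S)))
          = ∑ i : Fin n, ∑ α : Fin N, 2 * q * (G i α * G i α) / (δ + S) := by
        simp [Finset.sum_ite_eq, mul_ite, ite_mul]
      rw [e, hSdef, Finset.mul_sum, Finset.sum_div]
      refine Finset.sum_congr rfl fun i _ => ?_
      rw [Finset.mul_sum, Finset.sum_div]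
      exact Finset.sum_congr rfl fun α _ => by ring
    have h3 : (∑ i : Fin n, ∑ j : Fin n, ∑ α : Fin N, ∑ β : Fin N,
        q ^ 2 * ((G i α) ^ 2 * (G j β) ^ 2) / (δ + S) ^ 2)
        = q ^ 2 * S ^ 2 / (δ + S) ^ 2 := by
      have e : S ^ 2 = ∑ i : Fin n, ∑ j : Fin n, ∑ α : Fin N, ∑ β : Fin N,
          (G i α) ^ 2 * (G j β) ^ 2 := by
        rw [hSdef, sq, Finset.sum_mul_sum]
        refine Finset.sum_congr rfl fun i _ => ?_
        refine Finset.sum_congr rfl fun j _ => ?_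
        rw [Finset.sum_mul_sum]
      rw [e]
      simp only [Finset.mul_sum, Finset.sum_div]
    rw [h1, h2, h3]
  rw [hbig, htrace]
  have hc : (0 : ℝ) < M - 1 + ε := by linarith
  set u : ℝ := S / (δ + S) with hu
  have e1 : q * S / (δ + S) = q * u := by rw [hu, mul_div_assoc]
  have e2 : 2 * q * S / (δ + S) = 2 * q * u := by rw [hu, mul_div_assoc]
  have e3 : q ^ 2 * S ^ 2 / (δ + S) ^ 2 = q ^ 2 * u ^ 2 := by
    rw [hu, mul_div_assoc, div_pow]
  have hMN : ((n * N : ℝ) - 1 + ε) = M - 1 + ε := by rw [hM]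
  rw [e1, e2, e3, hMN, one_div, mul_comm ((M - 1 + ε)⁻¹), ← div_eq_mul_inv,
    le_div_iff₀ hc]
  have key : (M + q * u) ^ 2 = (M + 2 * q * u + q ^ 2 * u ^ 2) * (M - 1 + ε)
      + (-(-M * (1 - ε) - 2 * (1 - ε) * q * u + (M - 2 + ε) * q ^ 2 * u ^ 2)) := by
    ring
  have hMN2 : (-(n * N : ℝ)) = -M := by rw [hM]
  have hMN3 : ((n * N : ℝ) - 2 + ε) = M - 2 + ε := by rw [hM]
  rw [hMN2, hMN3]
  constructor <;> intro h <;> linarith [key]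
end

section
/- Let n ≥ 2, P0 ∈ (n, n+1), p ∈ (n, P0), δ ∈ [0,1], and let X, Y be vectors in R^K. Set f(t) := (1 + (δ + t²)^(n/2))^((p−n)/n) (δ + t²)^((n−2)/2). Then (f(|X|) X − f(|Y|) Y) · (X − Y) ≥ (1/2)(f(|X|) + f(|Y|)) |X − Y|². -/
theorem monotonicity_lower_bound (n : ℕ) (hn : 2 ≤ n) (P0 p δ : ℝ)
    (hP0 : (n : ℝ) < P0 ∧ P0 < (n : ℝ) + 1)
    (hp : p ∈ Set.Ioo (n : ℝ) P0) (hδ : δ ∈ Set.Icc (0 : ℝ) 1)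
    (K : ℕ) (X Y : EuclideanSpace ℝ (Fin K)) (f : ℝ → ℝ)
    (hf : ∀ t, f t = (1 + (δ + t ^ 2) ^ ((n : ℝ) / 2)) ^ ((p - (n : ℝ)) / (n : ℝ))
      * (δ + t ^ 2) ^ (((n : ℝ) - 2) / 2)) :
    (1 / 2) * (f ‖X‖ + f ‖Y‖) * ‖X - Y‖ ^ 2
      ≤ (inner ℝ (f ‖X‖ • X - f ‖Y‖ • Y) (X - Y) : ℝ) := by
  obtain ⟨hδ0, hδ1⟩ := hδ
  obtain ⟨hpn, _⟩ := hp
  have hn0 : (0:ℝ) < n := by positivity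
  -- f is monotone on nonnegative reals
  have hmono : ∀ s t : ℝ, 0 ≤ s → s ≤ t → f s ≤ f t := by
    intro s t hs hst
    rw [hf s, hf t]
    have h1 : (0:ℝ) ≤ δ + s ^ 2 := by positivity
    have h2 : δ + s ^ 2 ≤ δ + t ^ 2 := by
      have := pow_le_pow_left₀ hs hst 2
      linarith
    have he1 : (0:ℝ) ≤ ((n:ℝ) - 2) / 2 := by
      have : (2:ℝ) ≤ n := by exact_mod_cast hn
      linarith
    have he2 : (0:ℝ) ≤ (p - (n:ℝ)) / n := by
      apply div_nonneg _ hn0.le; linarith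
    have hb : (δ + s ^ 2) ^ ((n:ℝ)/2) ≤ (δ + t ^ 2) ^ ((n:ℝ)/2) :=
      Real.rpow_le_rpow h1 h2 (by positivity)
    apply mul_le_mul
    · exact Real.rpow_le_rpow (by positivity) (by linarith) he2
    · exact Real.rpow_le_rpow h1 h2 he1
    · positivity
    · positivity
  -- key sign fact
  have hkey : 0 ≤ (f ‖X‖ - f ‖Y‖) * (‖X‖ ^ 2 - ‖Y‖ ^ 2) := by
    rcases le_total ‖X‖ ‖Y‖ with h | h
    · have h1 := hmono _ _ (norm_nonneg X) h
      have h2 := pow_le_pow_left₀ (norm_nonneg X) h 2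
      nlinarith
    · have h1 := hmono _ _ (norm_nonneg Y) h
      have h2 := pow_le_pow_left₀ (norm_nonneg Y) h 2
      exact mul_nonneg (by linarith) (by linarith)
  have hXX : (inner ℝ X X : ℝ) = ‖X‖ ^ 2 := real_inner_self_eq_norm_sq X
  have hYY : (inner ℝ Y Y : ℝ) = ‖Y‖ ^ 2 := real_inner_self_eq_norm_sq Y
  have hsub : ‖X - Y‖ ^ 2 = ‖X‖ ^ 2 - 2 * (inner ℝ X Y : ℝ) + ‖Y‖ ^ 2 :=
    norm_sub_sq_real X Y
  have hcomm : (inner ℝ Y X : ℝ) = (inner ℝ X Y : ℝ) := (real_inner_comm Y X).symm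
  rw [inner_sub_left, inner_sub_right, inner_sub_right, real_inner_smul_left,
    real_inner_smul_left, real_inner_smul_left, real_inner_smul_left,
    hXX, hYY, hcomm, hsub]
  nlinarith [hkey]
end

section
/- With notation as follows, the two-dimensional reduction of the monotonicity inequality holds: for all r ≥ 0, θ ∈ [0, 2π], p > n ≥ 2, δ ∈ [0,1], letting f(t) := (1 + (δ + t²)^(n/2))^((p−n)/n)(δ + t²)^((n−2)/2), X = (1,0), Y = (r cos θ, r sin θ), the inequality (f(1)X − f(r)Y)·(X−Y) ≥ (1/2)(f(1)+f(r))|X−Y|² is equivalent to (r² − 1)(f(r) − f(1)) ≥ 0, and the latter holds since f is nondecreasing on [0,∞). -/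
lemma f_mono_aux (n : ℕ) (hn : 2 ≤ n) (p δ : ℝ) (hp : (n : ℝ) < p) (hδ : 0 ≤ δ)
    (a b : ℝ) (ha : 0 ≤ a) (hab : a ≤ b) :
    (1 + (δ + a ^ 2) ^ ((n : ℝ) / 2)) ^ ((p - (n : ℝ)) / (n : ℝ))
      * (δ + a ^ 2) ^ (((n : ℝ) - 2) / 2)
    ≤ (1 + (δ + b ^ 2) ^ ((n : ℝ) / 2)) ^ ((p - (n : ℝ)) / (n : ℝ))
      * (δ + b ^ 2) ^ (((n : ℝ) - 2) / 2) := by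
  have hn' : (2 : ℝ) ≤ n := by exact_mod_cast hn
  have hna : 0 ≤ δ + a ^ 2 := by positivity
  have hnb : 0 ≤ δ + b ^ 2 := by positivity
  have hab2 : δ + a ^ 2 ≤ δ + b ^ 2 := by nlinarith
  have h1 : (δ + a ^ 2) ^ ((n : ℝ) / 2) ≤ (δ + b ^ 2) ^ ((n : ℝ) / 2) :=
    Real.rpow_le_rpow hna hab2 (by positivity)
  have h2 : (1 + (δ + a ^ 2) ^ ((n : ℝ) / 2)) ^ ((p - (n : ℝ)) / (n : ℝ))
      ≤ (1 + (δ + b ^ 2) ^ ((n : ℝ) / 2)) ^ ((p - (n : ℝ)) / (n : ℝ)) := by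
    apply Real.rpow_le_rpow (by positivity) (by linarith)
    have : (0 : ℝ) < n := by linarith
    have : 0 ≤ p - (n : ℝ) := by linarith
    positivity
  have h3 : (δ + a ^ 2) ^ (((n : ℝ) - 2) / 2) ≤ (δ + b ^ 2) ^ (((n : ℝ) - 2) / 2) :=
    Real.rpow_le_rpow hna hab2 (by linarith)
  apply mul_le_mul h2 h3 (Real.rpow_nonneg hna _) (by positivity)

theorem monotonicity_two_dim_reduction (n : ℕ) (hn : 2 ≤ n) (p δ r θ : ℝ)
    (hp : (n : ℝ) < p) (hδ : δ ∈ Set.Icc (0 : ℝ) 1) (hr : 0 ≤ r)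
    (hθ : θ ∈ Set.Icc (0 : ℝ) (2 * Real.pi)) (f : ℝ → ℝ)
    (hf : ∀ t, f t = (1 + (δ + t ^ 2) ^ ((n : ℝ) / 2)) ^ ((p - (n : ℝ)) / (n : ℝ))
      * (δ + t ^ 2) ^ (((n : ℝ) - 2) / 2)) :
    (((1 / 2) * (f 1 + f r) *
        ‖((WithLp.equiv 2 (Fin 2 → ℝ)).symm ![1, 0] : EuclideanSpace ℝ (Fin 2))
          - (WithLp.equiv 2 (Fin 2 → ℝ)).symm ![r * Real.cos θ, r * Real.sin θ]‖ ^ 2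
        ≤ (inner ℝ
            (f 1 • ((WithLp.equiv 2 (Fin 2 → ℝ)).symm ![1, 0] : EuclideanSpace ℝ (Fin 2))
              - f r • (WithLp.equiv 2 (Fin 2 → ℝ)).symm ![r * Real.cos θ, r * Real.sin θ])
            (((WithLp.equiv 2 (Fin 2 → ℝ)).symm ![1, 0] : EuclideanSpace ℝ (Fin 2))
              - (WithLp.equiv 2 (Fin 2 → ℝ)).symm ![r * Real.cos θ, r * Real.sin θ]) : ℝ))
      ↔ 0 ≤ (r ^ 2 - 1) * (f r - f 1))
    ∧ 0 ≤ (r ^ 2 - 1) * (f r - f 1) := by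
  have hcs : Real.cos θ ^ 2 + Real.sin θ ^ 2 = 1 := by
    rw [add_comm]; exact Real.sin_sq_add_cos_sq θ
  constructor
  · have hnorm : ‖((WithLp.equiv 2 (Fin 2 → ℝ)).symm ![1, 0] : EuclideanSpace ℝ (Fin 2))
          - (WithLp.equiv 2 (Fin 2 → ℝ)).symm ![r * Real.cos θ, r * Real.sin θ]‖ ^ 2
        = (1 - r * Real.cos θ) ^ 2 + (0 - r * Real.sin θ) ^ 2 := by
      rw [← @inner_self_eq_norm_sq ℝ]
      simp only [PiLp.inner_apply, Fin.sum_univ_two, WithLp.equiv_symm_apply, PiLp.sub_apply]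
      simp [sq_abs]
      rw [mul_pow, sq_abs, sq_abs]
      ring
    have hinner : (inner ℝ
            (f 1 • ((WithLp.equiv 2 (Fin 2 → ℝ)).symm ![1, 0] : EuclideanSpace ℝ (Fin 2))
              - f r • (WithLp.equiv 2 (Fin 2 → ℝ)).symm ![r * Real.cos θ, r * Real.sin θ])
            (((WithLp.equiv 2 (Fin 2 → ℝ)).symm ![1, 0] : EuclideanSpace ℝ (Fin 2))
              - (WithLp.equiv 2 (Fin 2 → ℝ)).symm ![r * Real.cos θ, r * Real.sin θ]) : ℝ)
        = (f 1 * 1 - f r * (r * Real.cos θ)) * (1 - r * Real.cos θ)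
          + (f 1 * 0 - f r * (r * Real.sin θ)) * (0 - r * Real.sin θ) := by
      simp [PiLp.inner_apply, Fin.sum_univ_two, WithLp.equiv_symm_apply]
      ring
    rw [hnorm, hinner]
    have key : (f 1 * 1 - f r * (r * Real.cos θ)) * (1 - r * Real.cos θ)
          + (f 1 * 0 - f r * (r * Real.sin θ)) * (0 - r * Real.sin θ)
        - 1 / 2 * (f 1 + f r) * ((1 - r * Real.cos θ) ^ 2 + (0 - r * Real.sin θ) ^ 2)
        = 1 / 2 * ((r ^ 2 - 1) * (f r - f 1)) := by
      linear_combination ((f r - f 1) * r ^ 2 / 2) * hcs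
    constructor <;> intro h <;> linarith
  · rcases le_or_gt r 1 with h | h
    · have := f_mono_aux n hn p δ hp hδ.1 r 1 hr h
      rw [← hf r, ← hf 1] at this
      have h1 : (0:ℝ) ≤ 1 - r ^ 2 := by nlinarith
      nlinarith [mul_nonneg h1 (sub_nonneg.2 this)]
    · have := f_mono_aux n hn p δ hp hδ.1 1 r (by norm_num) h.le
      rw [← hf r, ← hf 1] at this
      have h1 : (0:ℝ) ≤ r ^ 2 - 1 := by nlinarith
      nlinarith [mul_nonneg h1 (sub_nonneg.2 this)]
end

section
/- Let n ≥ 2, p ∈ (n, n+1), δ ∈ [0,1], and let g(t) := (1 + (δ + t²)^(n/2))^((p−n)/(2n)) (δ + t²)^((n−2)/4) for t ≥ 0. Define F(Z) := g(|Z|) Z for Z ∈ R^K. Then for all Z ∈ R^K, the operator norm of the derivative satisfies |∇F(Z)| ≤ (p/2) g(|Z|). -/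
open Real

lemma aux_deriv_bound {K : ℕ} (Z : EuclideanSpace ℝ (Fin K)) (φ : ℝ → ℝ) (h' : ℝ)
    (hφ : HasDerivAt φ h' (‖Z‖ ^ 2)) (h0 : 0 ≤ φ (‖Z‖ ^ 2)) (h1 : 0 ≤ h') :
    ‖fderiv ℝ (fun W : EuclideanSpace ℝ (Fin K) => φ (‖W‖ ^ 2) • W) Z‖
      ≤ φ (‖Z‖ ^ 2) + 2 * h' * ‖Z‖ ^ 2 := by
  have hsq : HasFDerivAt (fun W : EuclideanSpace ℝ (Fin K) => ‖W‖ ^ 2)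
      (2 • (innerSL ℝ Z)) Z := (hasStrictFDerivAt_norm_sq Z).hasFDerivAt
  have hc : HasFDerivAt (fun W : EuclideanSpace ℝ (Fin K) => φ (‖W‖ ^ 2))
      (h' • (2 • (innerSL ℝ Z))) Z := hφ.comp_hasFDerivAt Z hsq
  have hF : HasFDerivAt (fun W : EuclideanSpace ℝ (Fin K) => φ (‖W‖ ^ 2) • W)
      (φ (‖Z‖ ^ 2) • ContinuousLinearMap.id ℝ _ +
        (h' • (2 • (innerSL ℝ Z))).smulRight Z) Z := hc.smul (hasFDerivAt_id Z)
  rw [hF.fderiv]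
  apply ContinuousLinearMap.opNorm_le_bound
  · positivity
  intro W
  have happ : (φ (‖Z‖ ^ 2) • ContinuousLinearMap.id ℝ (EuclideanSpace ℝ (Fin K)) +
      (h' • (2 • (innerSL ℝ Z))).smulRight Z) W
      = φ (‖Z‖ ^ 2) • W + (h' * (2 * inner ℝ Z W)) • Z := by
    simp [mul_assoc, smul_smul]
  rw [happ]
  have hCS : |inner ℝ Z W| ≤ ‖Z‖ * ‖W‖ := abs_real_inner_le_norm Z W
  calc ‖φ (‖Z‖ ^ 2) • W + (h' * (2 * inner ℝ Z W)) • Z‖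
      ≤ ‖φ (‖Z‖ ^ 2) • W‖ + ‖(h' * (2 * inner ℝ Z W)) • Z‖ := norm_add_le _ _
    _ = φ (‖Z‖ ^ 2) * ‖W‖ + |h' * (2 * inner ℝ Z W)| * ‖Z‖ := by
        rw [norm_smul, norm_smul, Real.norm_eq_abs, Real.norm_eq_abs, abs_of_nonneg h0]
    _ ≤ φ (‖Z‖ ^ 2) * ‖W‖ + (h' * (2 * (‖Z‖ * ‖W‖))) * ‖Z‖ := by
        gcongr
        rw [abs_mul, abs_of_nonneg h1, abs_mul, abs_of_nonneg (by norm_num : (0:ℝ) ≤ 2)]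
        gcongr
    _ = (φ (‖Z‖ ^ 2) + 2 * h' * ‖Z‖ ^ 2) * ‖W‖ := by ring

theorem gradient_bound_V_quantity (n : ℕ) (hn : 2 ≤ n) (p δ : ℝ)
    (hp : p ∈ Set.Ioo (n : ℝ) ((n : ℝ) + 1)) (hδ : δ ∈ Set.Icc (0 : ℝ) 1)
    (K : ℕ) (g : ℝ → ℝ)
    (hg : ∀ t, g t = (1 + (δ + t ^ 2) ^ ((n : ℝ) / 2)) ^ ((p - (n : ℝ)) / (2 * (n : ℝ)))
      * (δ + t ^ 2) ^ (((n : ℝ) - 2) / 4))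
    (Z : EuclideanSpace ℝ (Fin K)) :
    ‖fderiv ℝ (fun W : EuclideanSpace ℝ (Fin K) => g ‖W‖ • W) Z‖ ≤ (p / 2) * g ‖Z‖ := by
  have hn2 : (2:ℝ) ≤ (n:ℝ) := by exact_mod_cast hn
  have hn0 : (n:ℝ) ≠ 0 := by linarith
  have hα : 0 ≤ (p - n) / (2 * n) := by
    apply div_nonneg (by linarith [hp.1]) (by linarith)
  have hν1 : (1:ℝ) ≤ (n:ℝ)/2 := by linarith
  have hδ0 : 0 ≤ δ := hδ.1
  set ν : ℝ := (n:ℝ)/2 with hνdef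
  set α : ℝ := (p - (n:ℝ))/(2*(n:ℝ)) with hαdef
  set β : ℝ := ((n:ℝ)-2)/4 with hβdef
  have hβ : 0 ≤ β := by rw [hβdef]; linarith
  have hν0' : 0 ≤ ν := by linarith
  rcases lt_or_eq_of_le (add_nonneg hδ0 (sq_nonneg ‖Z‖) : (0:ℝ) ≤ δ + ‖Z‖^2) with hu | hu
  · -- main case: δ + ‖Z‖² > 0
    set u : ℝ := δ + ‖Z‖^2 with hudef
    have huν : 0 ≤ u ^ ν := Real.rpow_nonneg hu.le ν
    have hA : (0:ℝ) < 1 + u ^ ν := by linarith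
    have hd1 : HasDerivAt (fun s : ℝ => δ + s) 1 (‖Z‖^2) := (hasDerivAt_id _).const_add δ
    have hd2 : HasDerivAt (fun s : ℝ => (δ + s) ^ ν) (1 * ν * u ^ (ν - 1)) (‖Z‖^2) :=
      hd1.rpow_const (Or.inl hu.ne')
    have hd3 : HasDerivAt (fun s : ℝ => 1 + (δ + s) ^ ν) (1 * ν * u ^ (ν - 1)) (‖Z‖^2) :=
      hd2.const_add 1
    have hd4 : HasDerivAt (fun s : ℝ => (1 + (δ + s) ^ ν) ^ α)
        (1 * ν * u ^ (ν - 1) * α * (1 + u ^ ν) ^ (α - 1)) (‖Z‖^2) :=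
      hd3.rpow_const (Or.inl hA.ne')
    have hd5 : HasDerivAt (fun s : ℝ => (δ + s) ^ β) (1 * β * u ^ (β - 1)) (‖Z‖^2) :=
      hd1.rpow_const (Or.inl hu.ne')
    have hφ : HasDerivAt (fun s : ℝ => (1 + (δ + s) ^ ν) ^ α * (δ + s) ^ β)
        (1 * ν * u ^ (ν - 1) * α * (1 + u ^ ν) ^ (α - 1) * u ^ β
          + (1 + u ^ ν) ^ α * (1 * β * u ^ (β - 1))) (‖Z‖^2) := hd4.mul hd5
    set h' : ℝ := 1 * ν * u ^ (ν - 1) * α * (1 + u ^ ν) ^ (α - 1) * u ^ β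
          + (1 + u ^ ν) ^ α * (1 * β * u ^ (β - 1)) with hh'def
    have h1 : 0 ≤ h' := by
      rw [hh'def]
      apply add_nonneg
      · apply mul_nonneg _ (Real.rpow_nonneg hu.le β)
        apply mul_nonneg _ (Real.rpow_nonneg hA.le _)
        apply mul_nonneg _ hα
        apply mul_nonneg (by linarith) (Real.rpow_nonneg hu.le _)
      · apply mul_nonneg (Real.rpow_nonneg hA.le _)
        apply mul_nonneg (by linarith) (Real.rpow_nonneg hu.le _)
    have h0 : 0 ≤ (1 + u ^ ν) ^ α * u ^ β :=
      mul_nonneg (Real.rpow_nonneg hA.le _) (Real.rpow_nonneg hu.le _)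
    have key := aux_deriv_bound Z (fun s => (1 + (δ + s) ^ ν) ^ α * (δ + s) ^ β) h' hφ h0 h1
    simp only [hg]
    refine le_trans key ?_
    beta_reduce
    rw [← hudef]
    -- arithmetic part
    have hsub : ∀ y : ℝ, u ^ (y - 1) * u = u ^ y := by
      intro y
      nth_rewrite 2 [← Real.rpow_one u]
      rw [← Real.rpow_add hu]
      norm_num
    have hsubA : (1 + u ^ ν) ^ (α - 1) * (1 + u ^ ν) = (1 + u ^ ν) ^ α := by
      nth_rewrite 2 [← Real.rpow_one (1 + u ^ ν)]
      rw [← Real.rpow_add hA]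
      norm_num
    have hAle : (1 + u ^ ν) ^ (α - 1) * u ^ ν ≤ (1 + u ^ ν) ^ α := by
      rw [← hsubA]
      apply mul_le_mul_of_nonneg_left _ (Real.rpow_nonneg hA.le _)
      linarith
    have hkey : h' * u = α * ν * ((1 + u ^ ν) ^ (α - 1) * u ^ ν) * u ^ β
        + β * ((1 + u ^ ν) ^ α * u ^ β) := by
      have e1 : h' * u = α * ν * (1 + u ^ ν) ^ (α - 1) * u ^ β * (u ^ (ν-1) * u)
          + β * (1 + u ^ ν) ^ α * (u ^ (β-1) * u) := by rw [hh'def]; ring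
      rw [e1, hsub ν, hsub β]; ring
    have hcoeff : 2 * (α * ν + β) = p / 2 - 1 := by
      rw [hαdef, hνdef, hβdef]; field_simp; ring
    have hbound : 2 * h' * ‖Z‖^2 ≤ (p/2 - 1) * ((1 + u ^ ν) ^ α * u ^ β) := by
      have hZu : ‖Z‖^2 ≤ u := by rw [hudef]; linarith
      have step1 : 2 * h' * ‖Z‖^2 ≤ 2 * (h' * u) := by nlinarith
      have step2 : α * ν * ((1 + u ^ ν) ^ (α - 1) * u ^ ν) * u ^ β
          ≤ α * ν * ((1 + u ^ ν) ^ α) * u ^ β := by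
        apply mul_le_mul_of_nonneg_right _ (Real.rpow_nonneg hu.le _)
        apply mul_le_mul_of_nonneg_left hAle
        exact mul_nonneg hα hν0'
      calc 2 * h' * ‖Z‖^2 ≤ 2 * (h' * u) := step1
        _ = 2 * (α * ν * ((1 + u ^ ν) ^ (α - 1) * u ^ ν) * u ^ β
              + β * ((1 + u ^ ν) ^ α * u ^ β)) := by rw [hkey]
        _ ≤ 2 * (α * ν * ((1 + u ^ ν) ^ α) * u ^ β
              + β * ((1 + u ^ ν) ^ α * u ^ β)) := by linarith
        _ = 2 * (α * ν + β) * ((1 + u ^ ν) ^ α * u ^ β) := by ring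
        _ = (p/2 - 1) * ((1 + u ^ ν) ^ α * u ^ β) := by rw [hcoeff]
    linarith
  · -- δ + ‖Z‖² = 0 : δ = 0 and Z = 0
    have hδeq : δ = 0 := by nlinarith [sq_nonneg ‖Z‖]
    have hZ0 : ‖Z‖ = 0 := by nlinarith [norm_nonneg Z]
    have hZ : Z = 0 := norm_eq_zero.mp hZ0
    subst hδeq hZ
    rcases eq_or_lt_of_le hn2 with hn2e | hn3
    · -- n = 2
      have hβ0 : β = 0 := by rw [hβdef, ← hn2e]; ring
      have hν0 : ν = 1 := by rw [hνdef, ← hn2e]; norm_num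
      have hgW : ∀ t : ℝ, g t = (1 + t ^ 2) ^ α := by
        intro t
        rw [hg t, hβ0, hν0, Real.rpow_zero, mul_one, zero_add, Real.rpow_one]
      have hd1 : HasDerivAt (fun s : ℝ => 1 + s) 1 (‖(0 : EuclideanSpace ℝ (Fin K))‖^2) :=
        (hasDerivAt_id _).const_add 1
      have hne : (1 : ℝ) + ‖(0 : EuclideanSpace ℝ (Fin K))‖^2 ≠ 0 := by positivity
      have hφ : HasDerivAt (fun s : ℝ => (1 + s) ^ α)
          (1 * α * (1 + ‖(0 : EuclideanSpace ℝ (Fin K))‖^2) ^ (α - 1))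
          (‖(0 : EuclideanSpace ℝ (Fin K))‖^2) := hd1.rpow_const (Or.inl hne)
      have h1 : 0 ≤ 1 * α * (1 + ‖(0 : EuclideanSpace ℝ (Fin K))‖^2) ^ (α - 1) := by
        apply mul_nonneg (by linarith) (Real.rpow_nonneg (by positivity) _)
      have h0 : 0 ≤ (1 + ‖(0 : EuclideanSpace ℝ (Fin K))‖^2) ^ α :=
        Real.rpow_nonneg (by positivity) _
      have key := aux_deriv_bound (0 : EuclideanSpace ℝ (Fin K)) (fun s => (1 + s) ^ α) _ hφ h0 h1
      simp only [hgW]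
      refine le_trans key ?_
      simp only [norm_zero]
      norm_num [Real.one_rpow]
      have : (2:ℝ) < p := lt_of_le_of_lt hn2 hp.1
      linarith
    · -- n ≥ 3 : fderiv is 0 and g 0 = 0
      have hβpos : 0 < β := by rw [hβdef]; linarith
      have hνpos : 0 < ν := by linarith
      have hg0 : g 0 = 0 := by
        rw [hg 0]
        have h02 : (0:ℝ) + 0^2 = 0 := by norm_num
        rw [h02, Real.zero_rpow hβpos.ne', mul_zero]
      have hgcont : Filter.Tendsto (fun W : EuclideanSpace ℝ (Fin K) => g ‖W‖)
          (nhds 0) (nhds 0) := by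
        have hfun : (fun W : EuclideanSpace ℝ (Fin K) => g ‖W‖)
            = fun W : EuclideanSpace ℝ (Fin K) => (1 + (‖W‖^2)^ν)^α * (‖W‖^2)^β := by
          funext W; rw [hg ‖W‖, zero_add]
        rw [hfun]
        have h1 : Filter.Tendsto (fun W : EuclideanSpace ℝ (Fin K) => ‖W‖^2)
            (nhds 0) (nhds 0) := by
          convert ((by fun_prop : Continuous (fun W : EuclideanSpace ℝ (Fin K) => ‖W‖^2)).tendsto (0 : EuclideanSpace ℝ (Fin K))) using 2; simp
        have h2 : ContinuousAt (fun s : ℝ => (1 + s^ν)^α * s^β) 0 := by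
          apply ContinuousAt.mul
          · apply ContinuousAt.rpow_const
            · exact continuousAt_const.add (continuousAt_id.rpow_const (Or.inr hνpos.le))
            · left
              simp [Real.zero_rpow hνpos.ne']
          · exact continuousAt_id.rpow_const (Or.inr hβpos.le)
        have h3 := h2.tendsto.comp h1
        simp only [Function.comp_def] at h3
        convert h3 using 2
        simp [Real.zero_rpow hνpos.ne', Real.zero_rpow hβpos.ne']
      have hF : HasFDerivAt (fun W : EuclideanSpace ℝ (Fin K) => g ‖W‖ • W)
          (0 : EuclideanSpace ℝ (Fin K) →L[ℝ] EuclideanSpace ℝ (Fin K)) 0 := by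
        rw [hasFDerivAt_iff_isLittleO_nhds_zero]
        simp only [zero_add, smul_zero, sub_zero, ContinuousLinearMap.zero_apply]
        rw [Asymptotics.isLittleO_iff]
        intro c hc
        filter_upwards [hgcont.eventually (eventually_abs_sub_lt 0 hc)] with W hW
        rw [norm_smul, Real.norm_eq_abs]
        gcongr
        rw [sub_zero] at hW
        exact hW.le
      rw [hF.fderiv, norm_zero, norm_zero, hg0, mul_zero]
end

section
/- Let n ≥ 2, p ∈ (n, n+1), δ ∈ [0,1], and g(t) := (1 + (δ + t²)^(n/2))^((p−n)/(2n)) (δ + t²)^((n−2)/4). Then for all X, Y ∈ R^K, |g(|X|) X − g(|Y|) Y| ≤ (p/2)(g(|X|) + g(|Y|)) |X − Y|. -/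
theorem g_key' (n : ℕ) (hn : 2 ≤ n) (p δ : ℝ) (hpn : (n:ℝ) ≤ p) (hδ : 0 ≤ δ)
    {t : ℝ} (ht : 0 < t) :
    ∃ d, HasDerivAt (fun t => (1 + (δ + t ^ 2) ^ ((n : ℝ) / 2)) ^ ((p - (n : ℝ)) / (2 * (n : ℝ)))
      * (δ + t ^ 2) ^ (((n : ℝ) - 2) / 4)) d t ∧ 0 ≤ d ∧
      t * d ≤ (p / 2 - 1) * ((1 + (δ + t ^ 2) ^ ((n : ℝ) / 2)) ^ ((p - (n : ℝ)) / (2 * (n : ℝ)))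
      * (δ + t ^ 2) ^ (((n : ℝ) - 2) / 4)) := by
  have hn0 : (0:ℝ) < (n:ℝ) := by
    have : (0:ℕ) < n := by omega
    exact_mod_cast this
  have hn2 : (2:ℝ) ≤ (n:ℝ) := by exact_mod_cast hn
  set α : ℝ := (p - (n:ℝ)) / (2 * (n:ℝ)) with hα
  set β : ℝ := ((n:ℝ) - 2) / 4 with hβ
  have hα0 : 0 ≤ α := div_nonneg (by linarith) (by linarith)
  have hβ0 : 0 ≤ β := div_nonneg (by linarith) (by norm_num)
  set B : ℝ := δ + t ^ 2 with hBdef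
  have hB : 0 < B := by positivity
  have rp : ∀ (x y : ℝ), 0 < x → x ^ (y - 1) * x = x ^ y := by
    intro x y hx
    nth_rewrite 2 [← Real.rpow_one x]
    rw [← Real.rpow_add hx]
    norm_num
  have hB' : HasDerivAt (fun x : ℝ => δ + x ^ 2) (2 * t) t := by
    simpa using ((hasDerivAt_pow 2 t).const_add δ)
  have hBn : HasDerivAt (fun x : ℝ => (δ + x ^ 2) ^ ((n:ℝ)/2))
      (2 * t * ((n:ℝ)/2) * B ^ ((n:ℝ)/2 - 1)) t :=
    hB'.rpow_const (Or.inl hB.ne')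
  set A : ℝ := 1 + B ^ ((n:ℝ)/2) with hAdef
  have hA : 0 < A := by positivity
  have hAd : HasDerivAt (fun x : ℝ => 1 + (δ + x ^ 2) ^ ((n:ℝ)/2))
      (2 * t * ((n:ℝ)/2) * B ^ ((n:ℝ)/2 - 1)) t := hBn.const_add 1
  have hAα : HasDerivAt (fun x : ℝ => (1 + (δ + x ^ 2) ^ ((n:ℝ)/2)) ^ α)
      (2 * t * ((n:ℝ)/2) * B ^ ((n:ℝ)/2 - 1) * α * A ^ (α - 1)) t :=
    hAd.rpow_const (Or.inl hA.ne')
  have hBβ : HasDerivAt (fun x : ℝ => (δ + x ^ 2) ^ β)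
      (2 * t * β * B ^ (β - 1)) t := hB'.rpow_const (Or.inl hB.ne')
  have hd := hAα.mul hBβ
  rw [← hBdef, ← hAdef] at hd
  refine ⟨_, hd, ?_, ?_⟩
  · have h1 : (0:ℝ) ≤ 2 * t * ((n:ℝ)/2) * B ^ ((n:ℝ)/2 - 1) * α * A ^ (α - 1) * B ^ β := by
      positivity
    have h2 : (0:ℝ) ≤ A ^ α * (2 * t * β * B ^ (β - 1)) := by positivity
    linarith
  · have ht2 : t ^ 2 ≤ B := by rw [hBdef]; linarith
    have e1 : t ^ 2 * B ^ ((n:ℝ)/2 - 1) ≤ B ^ ((n:ℝ)/2) := by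
      calc t ^ 2 * B ^ ((n:ℝ)/2 - 1) ≤ B * B ^ ((n:ℝ)/2 - 1) :=
            mul_le_mul_of_nonneg_right ht2 (Real.rpow_nonneg hB.le _)
        _ = B ^ ((n:ℝ)/2) := by rw [mul_comm]; exact rp _ _ hB
    have e2 : t ^ 2 * B ^ (β - 1) ≤ B ^ β := by
      calc t ^ 2 * B ^ (β - 1) ≤ B * B ^ (β - 1) :=
            mul_le_mul_of_nonneg_right ht2 (Real.rpow_nonneg hB.le _)
        _ = B ^ β := by rw [mul_comm]; exact rp _ _ hB
    have e3 : B ^ ((n:ℝ)/2) ≤ A := le_add_of_nonneg_left zero_le_one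
    have e4 : A ^ (α - 1) * A = A ^ α := rp A α hA
    have ha' : (0:ℝ) ≤ A ^ (α - 1) := Real.rpow_nonneg hA.le _
    have hb : (0:ℝ) ≤ B ^ β := Real.rpow_nonneg hB.le _
    have ha : (0:ℝ) ≤ A ^ α := Real.rpow_nonneg hA.le _
    calc t * (2 * t * ((n:ℝ)/2) * B ^ ((n:ℝ)/2 - 1) * α * A ^ (α - 1) * B ^ β
          + A ^ α * (2 * t * β * B ^ (β - 1)))
        = α * (n:ℝ) * (A ^ (α - 1) * (t ^ 2 * B ^ ((n:ℝ)/2 - 1)) * B ^ β)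
          + 2 * β * (A ^ α * (t ^ 2 * B ^ (β - 1))) := by ring
      _ ≤ α * (n:ℝ) * (A ^ (α - 1) * B ^ ((n:ℝ)/2) * B ^ β)
          + 2 * β * (A ^ α * B ^ β) := by gcongr
      _ ≤ α * (n:ℝ) * (A ^ (α - 1) * A * B ^ β)
          + 2 * β * (A ^ α * B ^ β) := by gcongr
      _ = (α * (n:ℝ) + 2 * β) * (A ^ α * B ^ β) := by rw [e4]; ring
      _ = (p / 2 - 1) * (A ^ α * B ^ β) := by
          rw [hα, hβ]
          field_simp
          ring

theorem g_cont' (n : ℕ) (hn : 2 ≤ n) (p δ : ℝ) (hδ : 0 ≤ δ) :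
    Continuous (fun t : ℝ => (1 + (δ + t ^ 2) ^ ((n : ℝ) / 2)) ^ ((p - (n : ℝ)) / (2 * (n : ℝ)))
      * (δ + t ^ 2) ^ (((n : ℝ) - 2) / 4)) := by
  have hn2 : (2:ℝ) ≤ (n:ℝ) := by exact_mod_cast hn
  have cB : Continuous fun t : ℝ => δ + t ^ 2 := by continuity
  have cBn : Continuous fun t : ℝ => (δ + t ^ 2) ^ ((n:ℝ)/2) :=
    (Real.continuous_rpow_const (by positivity)).comp cB
  have cBβ : Continuous fun t : ℝ => (δ + t ^ 2) ^ (((n:ℝ) - 2)/4) :=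
    (Real.continuous_rpow_const (by linarith)).comp cB
  have cA : Continuous fun t : ℝ => 1 + (δ + t ^ 2) ^ ((n:ℝ)/2) := continuous_const.add cBn
  have cAα : Continuous fun t : ℝ => (1 + (δ + t ^ 2) ^ ((n:ℝ)/2)) ^ ((p - (n:ℝ)) / (2 * (n:ℝ))) := by
    apply Continuous.rpow_const cA
    intro x
    left
    intro h
    nlinarith [Real.rpow_nonneg (show (0:ℝ) ≤ δ + x ^ 2 by positivity) ((n:ℝ)/2)]
  exact cAα.mul cBβ

theorem aux_main (n : ℕ) (hn : 2 ≤ n) (p δ : ℝ)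
    (hp : p ∈ Set.Ioo (n : ℝ) ((n : ℝ) + 1)) (hδ : δ ∈ Set.Icc (0 : ℝ) 1)
    (K : ℕ) (g : ℝ → ℝ)
    (hg : ∀ t, g t = (1 + (δ + t ^ 2) ^ ((n : ℝ) / 2)) ^ ((p - (n : ℝ)) / (2 * (n : ℝ)))
      * (δ + t ^ 2) ^ (((n : ℝ) - 2) / 4))
    (X Y : EuclideanSpace ℝ (Fin K)) (hxy : ‖Y‖ ≤ ‖X‖) :
    ‖g ‖X‖ • X - g ‖Y‖ • Y‖ ≤ (p / 2) * (g ‖X‖ + g ‖Y‖) * ‖X - Y‖ := by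
  obtain ⟨hpn, _⟩ := hp
  obtain ⟨hδ0, _⟩ := hδ
  have hgfun : g = fun t : ℝ => (1 + (δ + t ^ 2) ^ ((n : ℝ) / 2)) ^ ((p - (n : ℝ)) / (2 * (n : ℝ)))
      * (δ + t ^ 2) ^ (((n : ℝ) - 2) / 4) := funext hg
  have hn2 : (2:ℝ) ≤ (n:ℝ) := by exact_mod_cast hn
  have hp2 : (2:ℝ) ≤ p := by linarith
  have hpn' : (n:ℝ) ≤ p := hpn.le
  have gnonneg : ∀ t, 0 ≤ g t := fun t => by rw [hg]; positivity
  have hcont : Continuous g := hgfun ▸ g_cont' n hn p δ hδ0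
  have hmono : MonotoneOn g (Set.Ici 0) := by
    apply monotoneOn_of_deriv_nonneg (convex_Ici 0) hcont.continuousOn
    · intro x hx
      rw [interior_Ici] at hx
      obtain ⟨d, hd, _, _⟩ := g_key' n hn p δ hpn' hδ0 hx
      rw [← hgfun] at hd
      exact hd.differentiableAt.differentiableWithinAt
    · intro x hx
      rw [interior_Ici] at hx
      obtain ⟨d, hd, hd0, _⟩ := g_key' n hn p δ hpn' hδ0 hx
      rw [← hgfun] at hd
      rw [hd.deriv]
      exact hd0
  have hs0 : (0:ℝ) ≤ ‖X‖ := norm_nonneg _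
  have ht0 : (0:ℝ) ≤ ‖Y‖ := norm_nonneg _
  have hgle : g ‖Y‖ ≤ g ‖X‖ := hmono ht0 hs0 hxy
  have step1 : ‖g ‖X‖ • X - g ‖Y‖ • Y‖ ≤ g ‖X‖ * ‖X - Y‖ + (g ‖X‖ - g ‖Y‖) * ‖Y‖ := by
    have hsplit : g ‖X‖ • X - g ‖Y‖ • Y = g ‖X‖ • (X - Y) + (g ‖X‖ - g ‖Y‖) • Y := by
      module
    rw [hsplit]
    refine le_trans (norm_add_le _ _) ?_
    rw [norm_smul, norm_smul, Real.norm_eq_abs, Real.norm_eq_abs,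
      abs_of_nonneg (gnonneg _), abs_of_nonneg (sub_nonneg.mpr hgle)]
  have step2 : (g ‖X‖ - g ‖Y‖) * ‖Y‖ ≤ (p / 2 - 1) * g ‖X‖ * ‖X - Y‖ := by
    rcases eq_or_lt_of_le hxy with heq | hlt
    · rw [← heq, sub_self, zero_mul]
      exact mul_nonneg (mul_nonneg (by linarith) (gnonneg _)) (norm_nonneg _)
    · have hder : ∀ x ∈ Set.Ioo ‖Y‖ ‖X‖, HasDerivAt g (deriv g x) x := by
        intro x hx
        have hx0 : 0 < x := lt_of_le_of_lt ht0 hx.1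
        obtain ⟨d, hd, _, _⟩ := g_key' n hn p δ hpn' hδ0 hx0
        rw [← hgfun] at hd
        exact hd.deriv ▸ hd
      obtain ⟨c, hc, hslope⟩ :=
        exists_hasDerivAt_eq_slope g (deriv g) hlt hcont.continuousOn hder
      have hc0 : 0 < c := lt_of_le_of_lt ht0 hc.1
      obtain ⟨d, hd, hd0, hdb⟩ := g_key' n hn p δ hpn' hδ0 hc0
      rw [← hgfun] at hd
      rw [← hg c] at hdb
      have hdc : deriv g c = d := hd.deriv
      rw [hdc] at hslope
      have hst : (0:ℝ) < ‖X‖ - ‖Y‖ := by linarith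
      have hgs : g ‖X‖ - g ‖Y‖ = d * (‖X‖ - ‖Y‖) := by
        rw [hslope]
        field_simp
      have h5 : ‖X‖ - ‖Y‖ ≤ ‖X - Y‖ := norm_sub_norm_le X Y
      have h4 : g c ≤ g ‖X‖ := hmono hc0.le hs0 hc.2.le
      calc (g ‖X‖ - g ‖Y‖) * ‖Y‖ = (‖Y‖ * d) * (‖X‖ - ‖Y‖) := by rw [hgs]; ring
        _ ≤ (c * d) * (‖X‖ - ‖Y‖) :=
            mul_le_mul_of_nonneg_right (mul_le_mul_of_nonneg_right hc.1.le hd0) hst.le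
        _ ≤ ((p / 2 - 1) * g c) * (‖X‖ - ‖Y‖) := mul_le_mul_of_nonneg_right hdb hst.le
        _ ≤ ((p / 2 - 1) * g ‖X‖) * (‖X‖ - ‖Y‖) :=
            mul_le_mul_of_nonneg_right (mul_le_mul_of_nonneg_left h4 (by linarith)) hst.le
        _ ≤ (p / 2 - 1) * g ‖X‖ * ‖X - Y‖ :=
            mul_le_mul_of_nonneg_left h5 (mul_nonneg (by linarith) (gnonneg _))
  have hXY0 : (0:ℝ) ≤ ‖X - Y‖ := norm_nonneg _
  have hfinal : g ‖X‖ * ‖X - Y‖ + (p / 2 - 1) * g ‖X‖ * ‖X - Y‖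
      ≤ (p / 2) * (g ‖X‖ + g ‖Y‖) * ‖X - Y‖ := by
    nlinarith [mul_nonneg (gnonneg ‖Y‖) hXY0]
  linarith

theorem lipschitz_bound_V_quantity (n : ℕ) (hn : 2 ≤ n) (p δ : ℝ)
    (hp : p ∈ Set.Ioo (n : ℝ) ((n : ℝ) + 1)) (hδ : δ ∈ Set.Icc (0 : ℝ) 1)
    (K : ℕ) (g : ℝ → ℝ)
    (hg : ∀ t, g t = (1 + (δ + t ^ 2) ^ ((n : ℝ) / 2)) ^ ((p - (n : ℝ)) / (2 * (n : ℝ)))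
      * (δ + t ^ 2) ^ (((n : ℝ) - 2) / 4))
    (X Y : EuclideanSpace ℝ (Fin K)) :
    ‖g ‖X‖ • X - g ‖Y‖ • Y‖ ≤ (p / 2) * (g ‖X‖ + g ‖Y‖) * ‖X - Y‖ := by
  rcases le_total ‖Y‖ ‖X‖ with h | h
  · exact aux_main n hn p δ hp hδ K g hg X Y h
  · calc ‖g ‖X‖ • X - g ‖Y‖ • Y‖ = ‖g ‖Y‖ • Y - g ‖X‖ • X‖ := (norm_sub_rev _ _)
      _ ≤ (p / 2) * (g ‖Y‖ + g ‖X‖) * ‖Y - X‖ := aux_main n hn p δ hp hδ K g hg Y X h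
      _ = (p / 2) * (g ‖X‖ + g ‖Y‖) * ‖X - Y‖ := by rw [norm_sub_rev, add_comm (g ‖Y‖)]
end

section
/- Let n ≥ 2 and let s ≥ 0, p > n, and define for r ≥ 0 the function Φ(r) := ((s + r^n)^((p−n)/n) r^(n−1) − (s+1)^((p−n)/n))(r − 1). Then the s-derivative computation shows: ∂_s [ Φ(r) / ((s+r^n)^((p−n)/(2n)) r^(n/2) − (s+1)^((p−n)/(2n)))² ] has the same sign as (r−1)·[(s+r^n)^((p−n)/(2n)) r^((n−2)/2) − (s+1)^((p−n)/(2n))]·(r^n − 1) divided by ((s+r^n)^((p−n)/(2n)) r^(n/2) − (s+1)^((p−n)/(2n)))³ times a positive factor; in particular this derivative is ≥ 0 for all r ≥ 0. -/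
private lemma hasDerivAt_add_rpow (c e x : ℝ) (h : 0 < x + c) :
    HasDerivAt (fun σ : ℝ => (σ + c) ^ e) (e * (x + c) ^ (e - 1)) x := by
  have h1 := Real.hasDerivAt_rpow_const (x := x + c) (p := e) (Or.inl h.ne')
  have h2 := (hasDerivAt_id x).add_const c
  have h3 := h1.comp x h2
  rw [mul_one] at h3
  exact h3

theorem monotonicity_in_s (n : ℕ) (hn : 2 ≤ n) (p s r : ℝ)
    (hp : (n : ℝ) < p) (hs : 0 ≤ s) (hr : 0 ≤ r) :
    0 ≤ deriv (fun σ : ℝ =>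
        (((σ + r ^ (n : ℝ)) ^ ((p - (n : ℝ)) / (n : ℝ)) * r ^ ((n : ℝ) - 1)
            - (σ + 1) ^ ((p - (n : ℝ)) / (n : ℝ))) * (r - 1))
          / ((σ + r ^ (n : ℝ)) ^ ((p - (n : ℝ)) / (2 * (n : ℝ))) * r ^ ((n : ℝ) / 2)
            - (σ + 1) ^ ((p - (n : ℝ)) / (2 * (n : ℝ)))) ^ 2) s := by
  have hn0 : (0:ℝ) < (n:ℝ) := by
    have : (2:ℝ) ≤ (n:ℝ) := by exact_mod_cast hn
    linarith
  have hn2 : (2:ℝ) ≤ (n:ℝ) := by exact_mod_cast hn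
  set α := (p - (n:ℝ)) / (n:ℝ) with hαdef
  set β := (p - (n:ℝ)) / (2 * (n:ℝ)) with hβdef
  have hβpos : 0 < β := by
    apply div_pos (by linarith) (by linarith)
  have hαβ : α = β + β := by
    rw [hαdef, hβdef]; field_simp; ring
  rcases eq_or_ne r 1 with hr1 | hr1
  · subst hr1
    simp only [Real.one_rpow, mul_one, sub_self, mul_zero, zero_div, deriv_const]
    exact le_refl 0
  rcases hr.eq_or_lt with hr0 | hr0
  · -- r = 0 case : function is locally constant 1
    subst hr0
    have hev : (fun σ : ℝ =>
        (((σ + (0:ℝ) ^ (n : ℝ)) ^ α * (0:ℝ) ^ ((n : ℝ) - 1)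
            - (σ + 1) ^ α) * ((0:ℝ) - 1))
          / ((σ + (0:ℝ) ^ (n : ℝ)) ^ β * (0:ℝ) ^ ((n : ℝ) / 2)
            - (σ + 1) ^ β) ^ 2) =ᶠ[nhds s] (fun _ => (1:ℝ)) := by
      filter_upwards [eventually_gt_nhds (show (-1:ℝ) < s by linarith)] with σ hσ
      have hσ1 : 0 < σ + 1 := by linarith
      have hz1 : (0:ℝ) ^ ((n:ℝ) - 1) = 0 := Real.zero_rpow (by linarith)
      have hz2 : (0:ℝ) ^ ((n:ℝ) / 2) = 0 := Real.zero_rpow (by positivity)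
      have hsq : ((σ + 1) ^ β) ^ 2 = (σ + 1) ^ α := by
        rw [sq, ← Real.rpow_add hσ1, hαβ]
      have hpos : (0:ℝ) < (σ + 1) ^ α := Real.rpow_pos_of_pos hσ1 _
      simp only [hz1, hz2, mul_zero, zero_sub, neg_sq]
      rw [hsq, div_eq_one_iff_eq hpos.ne']
      ring
    rw [hev.deriv_eq, deriv_const]
  -- main case : 0 < r, r ≠ 1
  have hc : 0 < r ^ (n:ℝ) := Real.rpow_pos_of_pos hr0 _
  have hA : 0 < s + r ^ (n:ℝ) := by linarith
  have hB : 0 < s + 1 := by linarith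
  set A := s + r ^ (n:ℝ) with hAdef
  set B := s + 1 with hBdef
  set a := A ^ β with hadef
  set b := B ^ β with hbdef
  set a' := A ^ (β - 1) with ha'def
  set b' := B ^ (β - 1) with hb'def
  set u := r ^ ((n:ℝ) / 2) with hudef
  set v := r ^ (((n:ℝ) - 2) / 2) with hvdef
  have hapos : 0 < a := Real.rpow_pos_of_pos hA _
  have hbpos : 0 < b := Real.rpow_pos_of_pos hB _
  have ha'pos : 0 < a' := Real.rpow_pos_of_pos hA _
  have hb'pos : 0 < b' := Real.rpow_pos_of_pos hB _
  have hupos : 0 < u := Real.rpow_pos_of_pos hr0 _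
  have hvpos : 0 < v := Real.rpow_pos_of_pos hr0 _
  -- relations
  have ha : a = A * a' := by
    rw [hadef, ha'def, show β = 1 + (β - 1) by ring, Real.rpow_add hA, Real.rpow_one]
    ring_nf
  have hb : b = B * b' := by
    rw [hbdef, hb'def, show β = 1 + (β - 1) by ring, Real.rpow_add hB, Real.rpow_one]
    ring_nf
  have hAα : A ^ α = a * a := by
    rw [hadef, hαβ, Real.rpow_add hA]
  have hBα : B ^ α = b * b := by
    rw [hbdef, hαβ, Real.rpow_add hB]
  have hAα1 : A ^ (α - 1) = a * a' := by
    rw [hadef, ha'def, show α - 1 = β + (β - 1) by rw [hαβ]; ring, Real.rpow_add hA]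
  have hBα1 : B ^ (α - 1) = b * b' := by
    rw [hbdef, hb'def, show α - 1 = β + (β - 1) by rw [hαβ]; ring, Real.rpow_add hB]
  have huv : r ^ ((n:ℝ) - 1) = u * v := by
    rw [hudef, hvdef, ← Real.rpow_add hr0]
    congr 1; ring
  have huu : r ^ (n:ℝ) = u * u := by
    rw [hudef, ← Real.rpow_add hr0]
    congr 1; ring
  -- sign facts
  have h1 : 0 ≤ (a * u - b) * (r - 1) ∧ 0 ≤ (A - B) * (a * v - b) ∧ a * u - b ≠ 0 := by
    rcases lt_or_gt_of_ne hr1 with hlt | hgt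
    · -- r < 1
      have hcl : r ^ (n:ℝ) < 1 := Real.rpow_lt_one hr hlt (by linarith)
      have hABlt : A < B := by rw [hAdef, hBdef]; linarith
      have hab : a < b := by
        rw [hadef, hbdef]; exact Real.rpow_lt_rpow hA.le hABlt hβpos
      have hu1 : u ≤ 1 := Real.rpow_le_one hr hlt.le (by positivity)
      have hv1 : v ≤ 1 := Real.rpow_le_one hr hlt.le (by linarith)
      have hau : a * u ≤ a := mul_le_of_le_one_right hapos.le hu1
      have hav : a * v ≤ a := mul_le_of_le_one_right hapos.le hv1
      have e1 : 0 ≤ -(a * u - b) * -(r - 1) :=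
        mul_nonneg (by linarith) (by linarith)
      have e2 : 0 ≤ -(A - B) * -(a * v - b) :=
        mul_nonneg (by linarith) (by linarith)
      rw [neg_mul_neg] at e1 e2
      exact ⟨e1, e2, ne_of_lt (by linarith)⟩
    · -- 1 < r
      have hcg : 1 < r ^ (n:ℝ) := Real.one_lt_rpow hgt (by linarith)
      have hABgt : B < A := by rw [hAdef, hBdef]; linarith
      have hab : b < a := by
        rw [hadef, hbdef]; exact Real.rpow_lt_rpow hB.le hABgt hβpos
      have hu1 : 1 ≤ u := Real.one_le_rpow hgt.le (by positivity)
      have hv1 : 1 ≤ v := Real.one_le_rpow hgt.le (by linarith)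
      have hau : a ≤ a * u := le_mul_of_one_le_right hapos.le hu1
      have hav : a ≤ a * v := le_mul_of_one_le_right hapos.le hv1
      refine ⟨mul_nonneg (by linarith) (by linarith),
        mul_nonneg (by linarith) (by linarith),
        ne_of_gt (by linarith)⟩
  obtain ⟨hsign1, hsign2, hDne⟩ := h1
  -- derivatives
  have hDA : HasDerivAt (fun σ : ℝ => (σ + r ^ (n:ℝ)) ^ α) (α * A ^ (α - 1)) s :=
    hasDerivAt_add_rpow _ _ _ hA
  have hDB : HasDerivAt (fun σ : ℝ => (σ + 1) ^ α) (α * B ^ (α - 1)) s :=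
    hasDerivAt_add_rpow _ _ _ hB
  have hDA2 : HasDerivAt (fun σ : ℝ => (σ + r ^ (n:ℝ)) ^ β) (β * a') s :=
    hasDerivAt_add_rpow _ _ _ hA
  have hDB2 : HasDerivAt (fun σ : ℝ => (σ + 1) ^ β) (β * b') s :=
    hasDerivAt_add_rpow _ _ _ hB
  have hN : HasDerivAt
      (fun σ : ℝ => ((σ + r ^ (n:ℝ)) ^ α * r ^ ((n:ℝ) - 1) - (σ + 1) ^ α) * (r - 1))
      ((α * A ^ (α - 1) * r ^ ((n:ℝ) - 1) - α * B ^ (α - 1)) * (r - 1)) s :=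
    ((hDA.mul_const _).sub hDB).mul_const _
  have hDfun : HasDerivAt (fun σ : ℝ => (σ + r ^ (n:ℝ)) ^ β * u - (σ + 1) ^ β)
      (β * a' * u - β * b') s := (hDA2.mul_const _).sub hDB2
  have hDsq : HasDerivAt (fun σ : ℝ => ((σ + r ^ (n:ℝ)) ^ β * u - (σ + 1) ^ β) ^ 2)
      ((2:ℝ) * (a * u - b) ^ 1 * (β * a' * u - β * b')) s := by
    have h := hDfun.pow 2
    rw [← hAdef, ← hBdef, ← hadef, ← hbdef] at h
    push_cast at h
    exact h
  have hDsne : ((fun σ : ℝ => (σ + r ^ (n:ℝ)) ^ β * u - (σ + 1) ^ β) s) ≠ 0 := hDne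
  have hf : HasDerivAt
      (fun σ : ℝ => (((σ + r ^ (n:ℝ)) ^ α * r ^ ((n:ℝ) - 1) - (σ + 1) ^ α) * (r - 1))
        / ((σ + r ^ (n:ℝ)) ^ β * u - (σ + 1) ^ β) ^ 2)
      ((((α * A ^ (α - 1) * r ^ ((n:ℝ) - 1) - α * B ^ (α - 1)) * (r - 1)) * ((a * u - b) ^ 2)
        - ((A ^ α * r ^ ((n:ℝ) - 1) - B ^ α) * (r - 1))
            * ((2:ℝ) * (a * u - b) ^ 1 * (β * a' * u - β * b')))
        / ((a * u - b) ^ 2) ^ 2) s :=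
    hN.div hDsq (pow_ne_zero 2 hDne)
  rw [hf.deriv]
  apply div_nonneg _ (by positivity)
  have key : ((α * A ^ (α - 1) * r ^ ((n:ℝ) - 1) - α * B ^ (α - 1)) * (r - 1)) * ((a * u - b) ^ 2)
        - ((A ^ α * r ^ ((n:ℝ) - 1) - B ^ α) * (r - 1))
            * ((2:ℝ) * (a * u - b) ^ 1 * (β * a' * u - β * b'))
      = (2 * β * a' * b' * u) * (((a * u - b) * (r - 1)) * ((A - B) * (a * v - b))) := by
    rw [hAα1, hBα1, hAα, hBα, huv, hαβ, ha, hb]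
    ring
  rw [key]
  exact mul_nonneg (by positivity) (mul_nonneg hsign1 hsign2)
end

section
/- Let n ≥ 2 be an integer, P0 ∈ (n, n+1), p ∈ (n, P0), δ ∈ [0,1], and let (f_k) and f be functions in L^p(μ) (valued in a Euclidean space) such that f_k → f μ-almost everywhere and ∫ [(1 + (δ + |f_k|²)^(n/2))^(p/n) − (1 + δ^(n/2))^(p/n)] dμ → ∫ [(1 + (δ + |f|²)^(n/2))^(p/n) − (1 + δ^(n/2))^(p/n)] dμ. Then f_k → f strongly in L^p(μ). -/
open MeasureTheory Filter
open scoped ENNReal NNReal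


private lemma add_rpow_le_rpow_add'_s16 {x y : ℝ} (hx : 0 ≤ x) (hy : 0 ≤ y) {q : ℝ}
    (hq : 1 ≤ q) : x ^ q + y ^ q ≤ (x + y) ^ q := by
  lift x to NNReal using hx
  lift y to NNReal using hy
  exact_mod_cast NNReal.add_rpow_le_rpow_add x y hq

/-- Lower bound: `G(s) ≥ s^(p/2)` where `s = ‖v‖²`. -/
private lemma riesz_lower {n p δ s : ℝ} (hn : 2 ≤ n) (hnp : n ≤ p) (hδ : 0 ≤ δ)
    (hs : 0 ≤ s) :
    s ^ (p / 2) ≤ (1 + (δ + s) ^ (n / 2)) ^ (p / n) - (1 + δ ^ (n / 2)) ^ (p / n) := by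
  have hn0 : (0:ℝ) < n := by linarith
  have h1 : δ ^ (n/2) + s ^ (n/2) ≤ (δ + s) ^ (n/2) :=
    add_rpow_le_rpow_add'_s16 hδ hs (by rw [le_div_iff₀] <;> linarith)
  have hδn : (0:ℝ) ≤ δ ^ (n/2) := Real.rpow_nonneg hδ _
  have hsn : (0:ℝ) ≤ s ^ (n/2) := Real.rpow_nonneg hs _
  have h3 : (1 + δ ^ (n/2)) ^ (p/n) + (s ^ (n/2)) ^ (p/n)
      ≤ ((1 + δ ^ (n/2)) + s ^ (n/2)) ^ (p/n) :=
    add_rpow_le_rpow_add'_s16 (by linarith) hsn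
      (by rw [le_div_iff₀ hn0]; linarith)
  have hpn0 : (0:ℝ) ≤ p / n := div_nonneg (by linarith) hn0.le
  have h4 : ((1 + δ ^ (n/2)) + s ^ (n/2)) ^ (p/n) ≤ (1 + (δ + s) ^ (n/2)) ^ (p/n) :=
    Real.rpow_le_rpow (by linarith) (by linarith) hpn0
  have h5 : (s ^ (n/2)) ^ (p/n) = s ^ (p/2) := by
    rw [← Real.rpow_mul hs]
    congr 1
    field_simp
  rw [h5] at h3
  linarith

/-- Upper bound `G(s²-term) ≤ 3^p (1 + s^p)` for `s = ‖v‖`, `δ ≤ 1`. -/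
private lemma riesz_upper {n p δ s : ℝ} (hn : 2 ≤ n) (hnp : n ≤ p) (hδ : 0 ≤ δ)
    (hδ1 : δ ≤ 1) (hs : 0 ≤ s) :
    (1 + (δ + s ^ (2:ℕ)) ^ (n / 2)) ^ (p / n) ≤ 3 ^ p * (1 + s ^ p) := by
  have hn0 : (0:ℝ) < n := by linarith
  have hp0 : (0:ℝ) < p := by linarith
  have h1 : δ + s ^ (2:ℕ) ≤ (1 + s) ^ (2:ℝ) := by
    rw [show ((2:ℝ)) = ((2:ℕ):ℝ) by norm_num, Real.rpow_natCast]
    nlinarith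
  have h2 : (δ + s ^ (2:ℕ)) ^ (n/2) ≤ ((1+s) ^ (2:ℝ)) ^ (n/2) :=
    Real.rpow_le_rpow (by positivity) h1 (by positivity)
  have h3 : ((1+s) ^ (2:ℝ)) ^ (n/2) = (1+s) ^ n := by
    rw [← Real.rpow_mul (by linarith)]
    congr 1
    ring
  have h4 : 1 + (1+s) ^ n ≤ (2 + s) ^ n := by
    have := add_rpow_le_rpow_add'_s16 (x := 1) (y := 1 + s) (by norm_num) (by linarith)
      (q := n) (by linarith)
    rw [Real.one_rpow] at this
    convert this using 2
    ring
  have h5 : (1 + (δ + s ^ (2:ℕ)) ^ (n/2)) ^ (p/n) ≤ ((2+s) ^ n) ^ (p/n) :=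
    Real.rpow_le_rpow (by positivity) (by rw [h3] at h2; linarith) (by positivity)
  have h6 : ((2+s) ^ n) ^ (p/n) = (2+s) ^ p := by
    rw [← Real.rpow_mul (by linarith)]
    congr 1
    field_simp
  have h7 : (2 + s) ^ p ≤ (3 * max 1 s) ^ p := by
    apply Real.rpow_le_rpow (by linarith) _ hp0.le
    rcases le_total s 1 with h | h
    · calc 2 + s ≤ 3 := by linarith
        _ ≤ 3 * max 1 s := by simp [max_eq_left h]
    · calc 2 + s ≤ 3 * s := by linarith
        _ ≤ 3 * max 1 s := by simp [max_eq_right h]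
  have h8 : (3 * max 1 s) ^ p = 3 ^ p * (max 1 s) ^ p := by
    rw [Real.mul_rpow (by norm_num) (le_max_of_le_left zero_le_one)]
  have h9 : (max 1 s) ^ p ≤ 1 + s ^ p := by
    rcases max_cases 1 s with ⟨he, _⟩ | ⟨he, _⟩
    · rw [he, Real.one_rpow]
      have : (0:ℝ) ≤ s ^ p := Real.rpow_nonneg hs _
      linarith
    · rw [he]
      have : (0:ℝ) ≤ (1:ℝ) := zero_le_one
      nlinarith [Real.rpow_nonneg hs p]
  have h39 : (0:ℝ) ≤ (3:ℝ) ^ p := Real.rpow_nonneg (by norm_num) _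
  calc (1 + (δ + s ^ (2:ℕ)) ^ (n/2)) ^ (p/n) ≤ (2+s) ^ p := h6 ▸ h5
    _ ≤ 3 ^ p * (max 1 s) ^ p := h8 ▸ h7
    _ ≤ 3 ^ p * (1 + s ^ p) := by nlinarith

/-- `(u+v)^p ≤ 2^p (u^p + v^p)` for `u,v ≥ 0`, `p ≥ 0`. -/
private lemma riesz_two {u v p : ℝ} (hu : 0 ≤ u) (hv : 0 ≤ v) (hp : 0 ≤ p) :
    (u + v) ^ p ≤ 2 ^ p * (u ^ p + v ^ p) := by
  have h1 : u + v ≤ 2 * max u v := by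
    rcases max_cases u v with ⟨he, h⟩ | ⟨he, h⟩ <;> rw [he] <;> linarith
  have h2 : (u+v) ^ p ≤ (2 * max u v) ^ p :=
    Real.rpow_le_rpow (by linarith) h1 hp
  rw [Real.mul_rpow (by norm_num) (le_max_of_le_left hu)] at h2
  have h3 : (max u v) ^ p ≤ u ^ p + v ^ p := by
    rcases max_cases u v with ⟨he, _⟩ | ⟨he, _⟩ <;> rw [he] <;>
      [nlinarith [Real.rpow_nonneg hv p]; nlinarith [Real.rpow_nonneg hu p]]
  have h4 : (0:ℝ) ≤ (2:ℝ) ^ p := Real.rpow_nonneg (by norm_num) _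
  nlinarith

theorem riesz_type_convergence {α : Type*} [MeasurableSpace α]
    (μ : Measure α) [IsFiniteMeasure μ]
    (n : ℕ) (hn : 2 ≤ n) (P0 p δ : ℝ) (hP0 : (n : ℝ) < P0 ∧ P0 < (n : ℝ) + 1)
    (hp : p ∈ Set.Ioo (n : ℝ) P0) (hδ : δ ∈ Set.Icc (0 : ℝ) 1)
    (d : ℕ) (f : ℕ → α → EuclideanSpace ℝ (Fin d)) (flim : α → EuclideanSpace ℝ (Fin d))
    (hmem : ∀ k, MemLp (f k) (ENNReal.ofReal p) μ)
    (hmemlim : MemLp flim (ENNReal.ofReal p) μ)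
    (hae : ∀ᵐ x ∂μ, Tendsto (fun k => f k x) atTop (nhds (flim x)))
    (henergy : Tendsto (fun k => ∫ x,
        ((1 + (δ + ‖f k x‖ ^ 2) ^ ((n : ℝ) / 2)) ^ (p / (n : ℝ))
          - (1 + δ ^ ((n : ℝ) / 2)) ^ (p / (n : ℝ))) ∂μ) atTop
      (nhds (∫ x, ((1 + (δ + ‖flim x‖ ^ 2) ^ ((n : ℝ) / 2)) ^ (p / (n : ℝ))
          - (1 + δ ^ ((n : ℝ) / 2)) ^ (p / (n : ℝ))) ∂μ))) :
    Tendsto (fun k => eLpNorm (f k - flim) (ENNReal.ofReal p) μ) atTop (nhds 0) := by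
  set G : EuclideanSpace ℝ (Fin d) → ℝ := fun v =>
    (1 + (δ + ‖v‖ ^ 2) ^ ((n : ℝ) / 2)) ^ (p / (n : ℝ))
      - (1 + δ ^ ((n : ℝ) / 2)) ^ (p / (n : ℝ)) with hG
  have hn2 : (2:ℝ) ≤ (n:ℝ) := by exact_mod_cast hn
  have hnp : (n:ℝ) ≤ p := hp.1.le
  have hp0 : (0:ℝ) < p := by linarith
  have hn0 : (0:ℝ) < (n:ℝ) := by linarith
  -- pointwise lower bound
  have hGlow : ∀ v : EuclideanSpace ℝ (Fin d), ‖v‖ ^ p ≤ G v := by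
    intro v
    have h := riesz_lower (n := (n:ℝ)) (p := p) (δ := δ) (s := ‖v‖ ^ 2)
      hn2 hnp hδ.1 (by positivity)
    calc ‖v‖ ^ p = (‖v‖ ^ 2) ^ (p / 2) := by
          rw [← Real.rpow_natCast ‖v‖ 2, ← Real.rpow_mul (norm_nonneg v)]
          congr 1
          push_cast
          ring
      _ ≤ G v := h
  have hGnn : ∀ v, 0 ≤ G v := fun v =>
    le_trans (Real.rpow_nonneg (norm_nonneg v) p) (hGlow v)
  -- pointwise upper bound
  have hGup : ∀ v : EuclideanSpace ℝ (Fin d), G v ≤ 3 ^ p * (1 + ‖v‖ ^ p) := by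
    intro v
    have h := riesz_upper (n := (n:ℝ)) (p := p) (δ := δ) (s := ‖v‖)
      hn2 hnp hδ.1 hδ.2 (norm_nonneg v)
    have h2 : (0:ℝ) ≤ (1 + δ ^ ((n:ℝ) / 2)) ^ (p / (n:ℝ)) := by
      have := Real.rpow_nonneg hδ.1 ((n:ℝ) / 2)
      exact Real.rpow_nonneg (by linarith) _
    simp only [hG]
    linarith
  -- continuity of G
  have hGcont : Continuous G := by
    have c1 : Continuous fun t : ℝ => t ^ ((n:ℝ) / 2) :=
      Real.continuous_rpow_const (div_nonneg hn0.le (by norm_num))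
    have c2 : Continuous fun t : ℝ => t ^ (p / (n:ℝ)) :=
      Real.continuous_rpow_const (div_nonneg hp0.le hn0.le)
    apply Continuous.sub _ continuous_const
    exact c2.comp ((continuous_const.add (c1.comp
      (continuous_const.add ((continuous_norm).pow 2)))))
  -- measurability and integrability
  have hfm : ∀ k, AEStronglyMeasurable (f k) μ := fun k => (hmem k).aestronglyMeasurable
  have hflm : AEStronglyMeasurable flim μ := hmemlim.aestronglyMeasurable
  have hGm : ∀ k, AEStronglyMeasurable (fun x => G (f k x)) μ := fun k =>
    hGcont.comp_aestronglyMeasurable (hfm k)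
  have hGlm : AEStronglyMeasurable (fun x => G (flim x)) μ :=
    hGcont.comp_aestronglyMeasurable hflm
  have hpt : (ENNReal.ofReal p).toReal = p := ENNReal.toReal_ofReal hp0.le
  have hpne0 : ENNReal.ofReal p ≠ 0 := by
    simp [ENNReal.ofReal_eq_zero, not_le, hp0]
  have hpnetop : ENNReal.ofReal p ≠ ⊤ := ENNReal.ofReal_ne_top
  have hIntnorm : ∀ (g : α → EuclideanSpace ℝ (Fin d)),
      MemLp g (ENNReal.ofReal p) μ → Integrable (fun x => G (g x)) μ := by
    intro g hg
    have hb : Integrable (fun x => (3:ℝ) ^ p * (1 + ‖g x‖ ^ p)) μ := by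
      have h1 : Integrable (fun x => ‖g x‖ ^ p) μ := by
        have := hg.integrable_norm_rpow hpne0 hpnetop
        rwa [hpt] at this
      exact ((integrable_const (1:ℝ)).add h1).const_mul _
    refine hb.mono' (hGcont.comp_aestronglyMeasurable hg.aestronglyMeasurable) ?_
    filter_upwards with x
    rw [Real.norm_of_nonneg (hGnn _)]
    exact hGup _
  have hInt : ∀ k, Integrable (fun x => G (f k x)) μ := fun k => hIntnorm _ (hmem k)
  have hIntlim : Integrable (fun x => G (flim x)) μ := hIntnorm _ hmemlim
  -- ENNReal-valued functions
  set H : ℕ → α → ℝ≥0∞ := fun k x => ENNReal.ofReal (‖f k x - flim x‖ ^ p) with hHdef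
  set B : ℕ → α → ℝ≥0∞ := fun k x =>
    ENNReal.ofReal (2 ^ p * (G (f k x) + G (flim x))) with hBdef
  set Bl : α → ℝ≥0∞ := fun x =>
    ENNReal.ofReal (2 ^ p * (G (flim x) + G (flim x))) with hBldef
  have hHmeas : ∀ k, AEMeasurable (H k) μ := by
    intro k
    apply ENNReal.measurable_ofReal.comp_aemeasurable
    exact ((Real.continuous_rpow_const hp0.le).comp_aestronglyMeasurable
      ((hfm k).sub hflm).norm).aemeasurable
  have hBmeas : ∀ k, AEMeasurable (B k) μ := by
    intro k
    apply ENNReal.measurable_ofReal.comp_aemeasurable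
    exact (((hGm k).add hGlm).const_mul _).aemeasurable
  have hHB : ∀ k x, H k x ≤ B k x := by
    intro k x
    apply ENNReal.ofReal_le_ofReal
    have h1 : ‖f k x - flim x‖ ^ p ≤ (‖f k x‖ + ‖flim x‖) ^ p :=
      Real.rpow_le_rpow (norm_nonneg _) (norm_sub_le _ _) hp0.le
    have h2 := riesz_two (norm_nonneg (f k x)) (norm_nonneg (flim x)) hp0.le
    have h3 : ‖f k x‖ ^ p ≤ G (f k x) := hGlow _
    have h4 : ‖flim x‖ ^ p ≤ G (flim x) := hGlow _
    have h5 : (0:ℝ) ≤ (2:ℝ) ^ p := Real.rpow_nonneg (by norm_num) _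
    nlinarith
  -- integrals of B
  have hbRealInt : ∀ k, Integrable (fun x => 2 ^ p * (G (f k x) + G (flim x))) μ :=
    fun k => ((hInt k).add hIntlim).const_mul _
  have hbRealnn : ∀ k x, (0:ℝ) ≤ 2 ^ p * (G (f k x) + G (flim x)) := by
    intro k x
    have h5 : (0:ℝ) ≤ (2:ℝ) ^ p := Real.rpow_nonneg (by norm_num) _
    have := hGnn (f k x); have := hGnn (flim x); nlinarith
  have hBint : ∀ k, ∫⁻ x, B k x ∂μ
      = ENNReal.ofReal (∫ x, 2 ^ p * (G (f k x) + G (flim x)) ∂μ) := fun k =>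
    (ofReal_integral_eq_lintegral_ofReal (hbRealInt k)
      (Eventually.of_forall (hbRealnn k))).symm
  have hBlInt : Integrable (fun x => 2 ^ p * (G (flim x) + G (flim x))) μ :=
    (hIntlim.add hIntlim).const_mul _
  have hblnn : ∀ x, (0:ℝ) ≤ 2 ^ p * (G (flim x) + G (flim x)) := by
    intro x
    have h5 : (0:ℝ) ≤ (2:ℝ) ^ p := Real.rpow_nonneg (by norm_num) _
    have := hGnn (flim x); nlinarith
  have hBlint : ∫⁻ x, Bl x ∂μ
      = ENNReal.ofReal (∫ x, 2 ^ p * (G (flim x) + G (flim x)) ∂μ) :=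
    (ofReal_integral_eq_lintegral_ofReal hBlInt (Eventually.of_forall hblnn)).symm
  set L : ℝ≥0∞ := ∫⁻ x, Bl x ∂μ with hLdef
  have hLfin : L ≠ ⊤ := by rw [hBlint]; exact ENNReal.ofReal_ne_top
  have hAfin : ∀ k, ∫⁻ x, B k x ∂μ ≠ ⊤ := by
    intro k; rw [hBint k]; exact ENNReal.ofReal_ne_top
  -- convergence of ∫⁻ B k to L
  have hBtend : Tendsto (fun k => ∫⁻ x, B k x ∂μ) atTop (nhds L) := by
    simp only [hBint, hBlint]
    apply ENNReal.tendsto_ofReal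
    have : ∀ k, ∫ x, 2 ^ p * (G (f k x) + G (flim x)) ∂μ
        = 2 ^ p * ((∫ x, G (f k x) ∂μ) + ∫ x, G (flim x) ∂μ) := by
      intro k
      rw [integral_const_mul, integral_add (hInt k) hIntlim]
    simp only [this]
    rw [integral_const_mul, integral_add hIntlim hIntlim]
    exact (henergy.add tendsto_const_nhds).const_mul _
  -- almost everywhere limits
  have haeBH : ∀ᵐ x ∂μ, Tendsto (fun k => B k x) atTop (nhds (Bl x))
      ∧ Tendsto (fun k => H k x) atTop (nhds 0) := by
    filter_upwards [hae] with x hx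
    constructor
    · apply ENNReal.tendsto_ofReal
      exact (tendsto_const_nhds.mul (((hGcont.tendsto _).comp hx).add
        tendsto_const_nhds))
    · have h1 : Tendsto (fun k => ‖f k x - flim x‖ ^ p) atTop (nhds 0) := by
        have h2 : Tendsto (fun k => ‖f k x - flim x‖) atTop (nhds 0) := by
          have := (hx.sub (tendsto_const_nhds (x := flim x))).norm
          simpa using this
        have h3 := ((Real.continuous_rpow_const hp0.le).tendsto 0).comp h2
        simpa [Real.zero_rpow hp0.ne', Function.comp_def] using h3
      simpa using ENNReal.tendsto_ofReal h1
  -- Fatou argument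
  set T : ℕ → ℝ≥0∞ := fun k => ∫⁻ x, H k x ∂μ with hTdef
  have hφmeas : ∀ k, AEMeasurable (fun x => B k x - H k x) μ := fun k =>
    (hBmeas k).sub (hHmeas k)
  have hkey : ∀ k, (∫⁻ x, (B k x - H k x) ∂μ) + T k = ∫⁻ x, B k x ∂μ := by
    intro k
    rw [hTdef, ← lintegral_add_right' _ (hHmeas k)]
    apply lintegral_congr fun x => tsub_add_cancel_of_le (hHB k x)
  have hφleA : ∀ k, (∫⁻ x, (B k x - H k x) ∂μ) ≤ ∫⁻ x, B k x ∂μ := fun k =>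
    lintegral_mono fun x => tsub_le_self
  have hliminf : L ≤ liminf (fun k => ∫⁻ x, (B k x - H k x) ∂μ) atTop := by
    have h1 : L = ∫⁻ x, liminf (fun k => B k x - H k x) atTop ∂μ := by
      apply lintegral_congr_ae
      filter_upwards [haeBH] with x hx
      have := (ENNReal.Tendsto.sub hx.1 hx.2 (Or.inr (by simp))).liminf_eq
      rw [this, tsub_zero]
    rw [h1]
    exact lintegral_liminf_le' hφmeas
  have hT0 : Tendsto T atTop (nhds 0) := by
    rw [ENNReal.tendsto_atTop_zero]
    intro ε hε
    have hε2 : ε / 2 ≠ 0 := (ENNReal.half_pos hε.ne').ne'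
    have h1 : ∀ᶠ k in atTop, ∫⁻ x, B k x ∂μ < L + ε / 2 :=
      hBtend.eventually_lt_const (ENNReal.lt_add_right hLfin hε2)
    have h2 : ∀ᶠ k in atTop, L - ε / 2 ≤ ∫⁻ x, (B k x - H k x) ∂μ := by
      rcases eq_or_ne (L - ε / 2) 0 with h | h
      · exact Eventually.of_forall fun k => by rw [h]; exact bot_le
      · have hL0 : L ≠ 0 := by
          intro h0
          rw [h0, zero_tsub] at h
          exact h rfl
        have hlt : L - ε / 2 < L := ENNReal.sub_lt_self hLfin hL0 hε2
        exact (eventually_lt_of_lt_liminf (lt_of_lt_of_le hlt hliminf)).mono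
          fun k hk => hk.le
    have h3 : ∀ᶠ k in atTop, T k ≤ ε := by
      filter_upwards [h1, h2] with k hk1 hk2
      have hφfin : (∫⁻ x, (B k x - H k x) ∂μ) ≠ ⊤ :=
        ne_top_of_le_ne_top (hAfin k) (hφleA k)
      have e1 : L ≤ (∫⁻ x, (B k x - H k x) ∂μ) + ε / 2 := tsub_le_iff_right.mp hk2
      have e2 : (∫⁻ x, (B k x - H k x) ∂μ) + T k
          ≤ (∫⁻ x, (B k x - H k x) ∂μ) + ε := by
        calc (∫⁻ x, (B k x - H k x) ∂μ) + T k = ∫⁻ x, B k x ∂μ := hkey k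
          _ ≤ L + ε / 2 := hk1.le
          _ ≤ ((∫⁻ x, (B k x - H k x) ∂μ) + ε / 2) + ε / 2 := by gcongr
          _ = (∫⁻ x, (B k x - H k x) ∂μ) + ε := by
              rw [add_assoc, ENNReal.add_halves]
      exact (ENNReal.add_le_add_iff_left hφfin).mp e2
    exact eventually_atTop.mp h3
  -- conclude
  have hrw : ∀ k, eLpNorm (f k - flim) (ENNReal.ofReal p) μ = (T k) ^ (1 / p) := by
    intro k
    rw [eLpNorm_eq_lintegral_rpow_enorm_toReal hpne0 hpnetop, hpt]
    simp only [hTdef]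
    congr 1
    apply lintegral_congr fun x => ?_
    simp only [hHdef, Pi.sub_apply]
    rw [← ofReal_norm_eq_enorm, ENNReal.ofReal_rpow_of_nonneg (norm_nonneg _) hp0.le]
  simp only [hrw]
  have : (0:ℝ≥0∞) = (0:ℝ≥0∞) ^ (1 / p) := by
    rw [ENNReal.zero_rpow_of_pos (by positivity)]
  rw [this]
  exact (ENNReal.continuous_rpow_const.tendsto 0).comp hT0
end
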